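/- arXiv:2408.05605 — 9 statements merged into one kernel-verified Lean document; each statement's English description precedes it below -/
import Mathlib

section
/- Let μ be an infinite cardinal and let G₀ be a simple graph with vertex set of cardinality μ that contains no clique of cardinality ℵ₁. Then there exists a simple graph G with vertex set of cardinality μ such that: (1) G contains no clique of cardinality ℵ₁; (2) G has the extension property (is a random graph): for any two disjoint finite sets X, Y of vertices of G there is a vertex v ∉ X ∪ Y adjacent to every vertex of X and to no vertex of Y; and (3) G₀ embeds into G as an induced subgraph, i.e. there is an injective map f from the vertices of G₀ to the vertices of G such that x and y are adjacent in G₀ if and only if f(x) and f(y) are adjacent in G. -/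
/-!
Close `G₀` off freely under the extension property. The vertices are the finitely branching
well-founded trees whose leaves are the vertices of `G₀` and whose internal node `node X Y` is a new
vertex for the finite sets `X`, `Y` of older vertices; it is joined to the vertices of `X` and
otherwise only to younger nodes. So `node X Y` witnesses the extension property for `(X, Y)`, and
there are only `μ` such trees. Two adjacent new vertices are parent and child, so the new vertices
of a clique have pairwise different depths and are countably many, while its old vertices form a
clique of `G₀`, countable by hypothesis.
-/

open Cardinal

theorem not_exists_pairwise_mk_eq_aleph_one_iff {α : Type*} {r : α → α → Prop} :
    (¬ ∃ S : Set α, S.Pairwise r ∧ #S = ℵ₁) ↔ ∀ S : Set α, S.Pairwise r → S.Countable := by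
  refine ⟨fun h S hS => ?_, fun h ⟨S, hS, hcard⟩ => ?_⟩
  · by_contra hS_unc
    rw [← le_aleph0_iff_set_countable, not_le, ← aleph_one_le_iff] at hS_unc
    obtain ⟨T, hTS, hT⟩ := le_mk_iff_exists_subset.1 hS_unc
    exact h ⟨T, hS.mono hTS, hT⟩
  · exact (lt_aleph_one_iff.2 (le_aleph0_iff_set_countable.2 (h S hS))).ne hcard

def SimpleGraph.HasExtensionProperty {V : Type*} (G : SimpleGraph V) : Prop :=
  ∀ X Y : Finset V, Disjoint X Y →
    ∃ v : V, v ∉ X ∧ v ∉ Y ∧ (∀ x ∈ X, G.Adj v x) ∧ (∀ y ∈ Y, ¬ G.Adj v y)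

/-- A leaf `inl v` is the vertex `v` of `G₀`; an internal node of shape `inr (m, n)` has `m` left
children, its neighbours among the older vertices, and `n` right children, its non-neighbours. -/
def ExtTree.Arity (V₀ : Type) : V₀ ⊕ ℕ × ℕ → Type
  | .inl _ => Empty
  | .inr (m, n) => Fin m ⊕ Fin n

instance (V₀ : Type) : ∀ a, Fintype (ExtTree.Arity V₀ a)
  | .inl _ => inferInstanceAs (Fintype Empty)
  | .inr (m, n) => inferInstanceAs (Fintype (Fin m ⊕ Fin n))

abbrev ExtTree (V₀ : Type) := WType (ExtTree.Arity V₀)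

namespace ExtTree

variable {V₀ : Type}

def base (v : V₀) : ExtTree V₀ := ⟨.inl v, Empty.elim⟩

theorem base_injective : Function.Injective (base : V₀ → ExtTree V₀) := by
  intro a b h
  cases h
  rfl

theorem card_eq (h : ℵ₀ ≤ #V₀) : #(ExtTree V₀) = #V₀ := by
  refine le_antisymm ?_ (mk_le_of_injective base_injective)
  calc #(ExtTree V₀) ≤ max #(V₀ ⊕ ℕ × ℕ) ℵ₀ := WType.cardinalMk_le_max_aleph0_of_finite
    _ = #V₀ := by simp [add_eq_left h (aleph0_le_mk _ |>.trans h), h]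

/-- Recording `Y` among the children makes `node X Y` deeper than, hence distinct from, every
vertex of `Y`. -/
noncomputable def node (X Y : Finset (ExtTree V₀)) : ExtTree V₀ :=
  ⟨.inr (X.card, Y.card), Sum.elim (fun i => X.equivFin.symm i) (fun j => Y.equivFin.symm j)⟩

theorem base_ne_node (v : V₀) (X Y : Finset (ExtTree V₀)) : base v ≠ node X Y :=
  nofun

def IsLeftChild (u w : ExtTree V₀) : Prop :=
  ∃ m n f i, w = WType.mk (β := Arity V₀) (.inr (m, n)) f ∧ u = f (.inl i)

theorem IsLeftChild.depth_lt {u w : ExtTree V₀} (h : IsLeftChild u w) : u.depth < w.depth := by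
  obtain ⟨m, n, f, i, rfl, rfl⟩ := h
  exact WType.depth_lt_depth_mk (β := Arity V₀) (.inr (m, n)) f (Sum.inl i)

theorem not_isLeftChild_base (u : ExtTree V₀) (v : V₀) : ¬ IsLeftChild u (base v) := by
  rintro ⟨m, n, f, i, h, -⟩
  exact nomatch h

theorem isLeftChild_node_iff {u : ExtTree V₀} {X Y : Finset (ExtTree V₀)} :
    IsLeftChild u (node X Y) ↔ u ∈ X := by
  constructor
  · rintro ⟨m, n, f, i, h, rfl⟩
    cases h
    simp
  · intro hu
    exact ⟨_, _, _, X.equivFin ⟨u, hu⟩, rfl, by simp⟩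

section Node

variable {X Y : Finset (ExtTree V₀)} {x : ExtTree V₀}

theorem depth_lt_depth_node_of_mem_left (hx : x ∈ X) : x.depth < (node X Y).depth :=
  (isLeftChild_node_iff.2 hx).depth_lt

theorem depth_lt_depth_node_of_mem_right (hx : x ∈ Y) : x.depth < (node X Y).depth := by
  obtain ⟨j, rfl⟩ : ∃ j, x = Y.equivFin.symm j := ⟨Y.equivFin ⟨x, hx⟩, by simp⟩
  exact WType.depth_lt_depth_mk (β := Arity V₀) (.inr (X.card, Y.card))
    (Sum.elim (fun i => X.equivFin.symm i) (fun j => Y.equivFin.symm j)) (Sum.inr j)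

theorem node_notMem_left : node X Y ∉ X := fun h =>
  (depth_lt_depth_node_of_mem_left h).false

theorem node_notMem_right : node X Y ∉ Y := fun h =>
  (depth_lt_depth_node_of_mem_right h).false

end Node

def extGraph (G₀ : SimpleGraph V₀) : SimpleGraph (ExtTree V₀) :=
  G₀.map base ⊔ SimpleGraph.fromRel IsLeftChild

variable {G₀ : SimpleGraph V₀}

theorem extGraph_adj_base {x y : V₀} : (extGraph G₀).Adj (base x) (base y) ↔ G₀.Adj x y := by
  simpa [extGraph, SimpleGraph.map_adj', base_injective.eq_iff, not_isLeftChild_base] using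
    G₀.ne_of_adj

theorem isLeftChild_or_isLeftChild_of_extGraph_adj {u w : ExtTree V₀} (hu : u ∉ Set.range base)
    (h : (extGraph G₀).Adj u w) : IsLeftChild u w ∨ IsLeftChild w u := by
  rcases h with ⟨-, a, b, -, rfl, -⟩ | ⟨-, h⟩
  · exact absurd ⟨a, rfl⟩ hu
  · exact h

theorem extGraph_adj_node_of_mem_left {X Y : Finset (ExtTree V₀)} {x : ExtTree V₀} (hx : x ∈ X) :
    (extGraph G₀).Adj (node X Y) x :=
  Or.inr ⟨(ne_of_mem_of_not_mem hx node_notMem_left).symm, Or.inr (isLeftChild_node_iff.2 hx)⟩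

theorem not_extGraph_adj_node_of_mem_right {X Y : Finset (ExtTree V₀)} {y : ExtTree V₀}
    (hXY : Disjoint X Y) (hy : y ∈ Y) : ¬ (extGraph G₀).Adj (node X Y) y := by
  intro h
  rcases isLeftChild_or_isLeftChild_of_extGraph_adj (fun ⟨v, hv⟩ => base_ne_node v X Y hv) h
    with h | h
  · exact (h.depth_lt.trans (depth_lt_depth_node_of_mem_right hy)).false
  · exact Finset.disjoint_left.1 hXY (isLeftChild_node_iff.1 h) hy

theorem extGraph_hasExtensionProperty : (extGraph G₀).HasExtensionProperty :=
  fun _ _ hXY => ⟨_, node_notMem_left, node_notMem_right,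
    fun _ => extGraph_adj_node_of_mem_left, fun _ => not_extGraph_adj_node_of_mem_right hXY⟩

theorem countable_of_pairwise_extGraph_adj (hG₀ : ∀ S : Set V₀, S.Pairwise G₀.Adj → S.Countable)
    {S : Set (ExtTree V₀)} (hS : S.Pairwise (extGraph G₀).Adj) : S.Countable := by
  have hbase : (base ⁻¹' S).Countable :=
    hG₀ _ fun x hx y hy hxy => extGraph_adj_base.1 (hS hx hy (base_injective.ne hxy))
  have hnode : (S \ Set.range base).Countable := by
    refine (Set.mapsTo_univ WType.depth _).countable_of_injOn (fun u hu w hw huw => ?_)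
      Set.countable_univ
    by_contra hne
    rcases isLeftChild_or_isLeftChild_of_extGraph_adj hu.2 (hS hu.1 hw.1 hne) with h | h
    · exact h.depth_lt.ne huw
    · exact h.depth_lt.ne' huw
  rw [← Set.inter_union_sdiff S (Set.range base), ← Set.image_preimage_eq_inter_range]
  exact (hbase.image base).union hnode

end ExtTree

theorem stmt_2 (μ : Cardinal) (hμ : ℵ₀ ≤ μ) (V₀ : Type) (G₀ : SimpleGraph V₀)
    (hcard : #V₀ = μ)
    (hnoclique : ¬ ∃ S : Set V₀, S.Pairwise G₀.Adj ∧ #S = aleph 1) :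
    ∃ (V : Type) (G : SimpleGraph V), #V = μ ∧
      (¬ ∃ S : Set V, S.Pairwise G.Adj ∧ #S = aleph 1) ∧
      (∀ X Y : Finset V, Disjoint X Y →
        ∃ v : V, v ∉ X ∧ v ∉ Y ∧ (∀ x ∈ X, G.Adj v x) ∧ (∀ y ∈ Y, ¬ G.Adj v y)) ∧
      (∃ f : V₀ → V, Function.Injective f ∧
        ∀ x y : V₀, G₀.Adj x y ↔ G.Adj (f x) (f y)) := by
  subst hcard
  rw [not_exists_pairwise_mk_eq_aleph_one_iff] at hnoclique
  refine ⟨ExtTree V₀, ExtTree.extGraph G₀, ExtTree.card_eq hμ, ?_,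
    ExtTree.extGraph_hasExtensionProperty, ExtTree.base, ExtTree.base_injective,
    fun _ _ => ExtTree.extGraph_adj_base.symm⟩
  rw [not_exists_pairwise_mk_eq_aleph_one_iff]
  exact fun _ => ExtTree.countable_of_pairwise_extGraph_adj hnoclique
end

section
/- Let λ be a strong limit cardinal, i.e. an infinite cardinal such that 2^μ < λ for every cardinal μ < λ. Then there exists a simple graph G with vertex set of cardinality λ such that: (1) G has no proper coloring with colors in a set of cardinality strictly less than λ; (2) G is triangle-free, i.e. contains no clique of size 3; (3) the edge relation of G is stable: there exists n < ω such that G contains no half-graph of height n; and (4) the first-order theory of G (in the language of graphs) is unstable: there exist a first-order formula φ(x̄, ȳ) in the language of graphs and, for every k < ω, tuples ā_0,…,ā_{k−1}, b̄_0,…,b̄_{k−1} of vertices of G such that G ⊨ φ(ā_i, b̄_j) if and only if i < j. -/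
open Cardinal FirstOrder FirstOrder.Language

/-- `G` contains a half-graph of height `n`: vertices `a_0, …, a_{n-1}`, `b_0, …, b_{n-1}`
with `a_i` adjacent to `b_j` iff `i < j`. -/
def ContainsHalfGraph {V : Type} (G : SimpleGraph V) (n : ℕ) : Prop :=
  ∃ a b : Fin n → V, ∀ i j : Fin n, G.Adj (a i) (b j) ↔ i < j

/-!
The graph is the shift graph on `ℕ ⊕ₗ λ.ord.ToType`: its vertices are the pairs `x < y`, and
`(x, y)` is adjacent to `(y, z)`.

A colouring `c` by `C` yields the map `x ↦ {c (x, y) | x < y}` from the order into `Set C`, which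
is injective because `c (x, y) = c (y, z)` never happens; hence `λ ≤ 2 ^ #C`, and `#C ≥ λ` for a
strong limit `λ`. Three pairwise adjacent pairs would include two consecutive ones `(x, y)` and
`(y, z)`, and the third would have to be `(z, x)`.

Adjacency is the union of the two equality relations `u.2 = v.1` and `u.1 = v.2`. In a half-graph
of height `6`, three of `a_0, …, a_4`, say `a_i, a_j, a_k` with `i < j < k`, are joined to `b_5` by
the same equality. They agree in that coordinate, so the joins among them use the other equality;
then `a_i` and `a_j` agree in the other coordinate too, and `a_j` is joined to `b_j`.

The formula `∃ z, E x z ∧ E z y` orders the pairs `(2i, 2i+2)` against the pairs `(2j+1, 2k+3)`,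
since it holds iff `2i + 2 < 2j + 1`.
-/

theorem Fintype.exists_lt_lt_apply_eq_apply {α β : Type*} [LinearOrder α] [Fintype α]
    [Fintype β] (f : α → β) (h : card β * 2 < card α) :
    ∃ x y z, x < y ∧ y < z ∧ f x = f z ∧ f y = f z := by
  classical
  obtain ⟨c, hc⟩ := Fintype.exists_lt_card_fiber_of_mul_lt_card f h
  obtain ⟨t, hts, ht⟩ := Finset.exists_subset_card_eq hc
  have hfib i : f (t.orderEmbOfFin ht i) = c :=
    (Finset.mem_filter.1 (hts (t.orderEmbOfFin_mem ht i))).2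
  exact ⟨_, _, _, (t.orderEmbOfFin ht).strictMono (show (0 : Fin 3) < 1 by decide),
    (t.orderEmbOfFin ht).strictMono (show (1 : Fin 3) < 2 by decide),
    (hfib 0).trans (hfib 2).symm, (hfib 1).trans (hfib 2).symm⟩

section HalfGraph

variable {α β : Type*}

theorem false_of_halfGraph_of_eq_or_eq {V : Type*} {f g : V → α} {f' g' : V → β} {n : ℕ}
    {a b : Fin n → V} (h : ∀ i j, f (a i) = g (b j) ∨ f' (a i) = g' (b j) ↔ i < j)
    {i j k l : Fin n} (hij : i < j) (hjk : j < k) (hi : f (a i) = g (b l))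
    (hj : f (a j) = g (b l)) (hk : f (a k) = g (b l)) : False := by
  -- `f (a x) = f (a y)`, so the first equality cannot join `a x` to `b y` without joining `a y`
  -- to `b y`.
  have key {x y : Fin n} (hxy : x < y) (hx : f (a x) = g (b l)) (hy : f (a y) = g (b l)) :
      f' (a x) = g' (b y) :=
    ((h x y).2 hxy).resolve_left fun hxy' =>
      ((h y y).1 (Or.inl (hy.trans (hx.symm.trans hxy')))).false
  exact ((h j j).1 (Or.inr ((key hjk hj hk).trans
    ((key (hij.trans hjk) hi hk).symm.trans (key hij hi hj))))).false

theorem not_containsHalfGraph_six_of_adj_iff {V : Type} {G : SimpleGraph V} {f g : V → α}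
    {f' g' : V → β} (hG : ∀ u v, G.Adj u v ↔ f u = g v ∨ f' u = g' v) :
    ¬ ContainsHalfGraph G 6 := by
  rintro ⟨a, b, h⟩
  simp only [hG] at h
  set l : Fin 6 := Fin.last 5
  obtain ⟨x, y, z, hxy, hyz, hx, hy⟩ := Fintype.exists_lt_lt_apply_eq_apply
    (fun i : Fin 5 => f (a i.castSucc) = g (b l)) (by simp)
  have hxy' := Fin.castSucc_lt_castSucc_iff.2 hxy
  have hyz' := Fin.castSucc_lt_castSucc_iff.2 hyz
  by_cases hz : f (a z.castSucc) = g (b l)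
  · exact false_of_halfGraph_of_eq_or_eq h hxy' hyz' (hx ▸ hz) (hy ▸ hz) hz
  · have h' {i : Fin 5} (hi : ¬ f (a i.castSucc) = g (b l)) : f' (a i.castSucc) = g' (b l) :=
      ((h _ l).2 (Fin.castSucc_lt_last i)).resolve_left hi
    exact false_of_halfGraph_of_eq_or_eq (fun i j => or_comm.trans (h i j)) hxy' hyz'
      (h' (hx ▸ hz)) (h' (hy ▸ hz)) (h' hz)

end HalfGraph

theorem Cardinal.mk_nat_sumLex {β : Type} (hβ : ℵ₀ ≤ #β) : #(ℕ ⊕ₗ β) = #β := by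
  simp [Lex, Cardinal.mk_sum, add_eq_right hβ hβ]

def commonNeighborFormula : Language.graph.Formula (Fin 1 ⊕ Fin 1) :=
  BoundedFormula.ex
    (adj.boundedFormula₂ (Term.var (Sum.inl (Sum.inl 0))) (&0) ⊓
      adj.boundedFormula₂ (&0) (Term.var (Sum.inl (Sum.inr 0))))

theorem realize_commonNeighborFormula {V : Type*} (G : SimpleGraph V) (v : Fin 1 ⊕ Fin 1 → V) :
    @Formula.Realize _ _ G.structure _ commonNeighborFormula v ↔
      ∃ w, G.Adj (v (.inl 0)) w ∧ G.Adj w (v (.inr 0)) := by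
  simp only [Formula.Realize, commonNeighborFormula, BoundedFormula.realize_ex,
    BoundedFormula.realize_inf, BoundedFormula.realize_rel₂, Term.realize_var, Sum.elim_inl]
  rfl

def shiftGraph (α : Type*) [Preorder α] : SimpleGraph {p : α × α // p.1 < p.2} where
  Adj u v := u.1.2 = v.1.1 ∨ u.1.1 = v.1.2
  symm := ⟨fun _ _ h => h.symm.imp Eq.symm Eq.symm⟩
  loopless := ⟨fun u h => h.elim u.2.ne' u.2.ne⟩

namespace shiftGraph

universe u

section Preorder

variable {α : Type*} [Preorder α] {u v w : {p : α × α // p.1 < p.2}}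

@[simp]
theorem adj_iff : (shiftGraph α).Adj u v ↔ u.1.2 = v.1.1 ∨ u.1.1 = v.1.2 := Iff.rfl

theorem not_adj_of_adj_of_adj (huv : (shiftGraph α).Adj u v) (hvw : (shiftGraph α).Adj v w) :
    ¬ (shiftGraph α).Adj u w := by
  have := u.2; have := v.2; have := w.2
  simp only [adj_iff] at *
  grind

theorem exists_adj_adj_iff (h₁ : u.1.1 ≠ v.1.1) (h₂ : u.1.2 ≠ v.1.2) :
    (∃ w, (shiftGraph α).Adj u w ∧ (shiftGraph α).Adj w v) ↔ u.1.2 < v.1.1 ∨ v.1.2 < u.1.1 := by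
  constructor
  · rintro ⟨w, huw | huw, hwv | hwv⟩
    · exact Or.inl (huw ▸ hwv ▸ w.2)
    · exact absurd (huw.trans hwv) h₂
    · exact absurd (huw.trans hwv) h₁
    · exact Or.inr (hwv ▸ huw ▸ w.2)
  · rintro (h | h)
    · exact ⟨⟨(u.1.2, v.1.1), h⟩, Or.inl rfl, Or.inl rfl⟩
    · exact ⟨⟨(v.1.2, u.1.1), h⟩, Or.inr rfl, Or.inr rfl⟩

theorem exists_realize_commonNeighborFormula_iff_lt {e : ℕ → α} (he : StrictMono e) (k : ℕ) :
    ∃ a b : Fin k → Fin 1 → {p : α × α // p.1 < p.2}, ∀ i j,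
      @Formula.Realize _ _ (shiftGraph α).structure _ commonNeighborFormula
        (Sum.elim (a i) (b j)) ↔ i < j := by
  let vtx (m n : ℕ) (h : m < n) : {p : α × α // p.1 < p.2} := ⟨(e m, e n), he h⟩
  refine ⟨fun i _ => vtx (2 * i) (2 * i + 2) (by omega),
    fun j _ => vtx (2 * j + 1) (2 * k + 3) (by omega), fun i j => ?_⟩
  rw [realize_commonNeighborFormula, Sum.elim_inl, Sum.elim_inr,
    exists_adj_adj_iff (he.injective.ne (by omega)) (he.injective.ne (by omega))]
  simp only [vtx, he.lt_iff_lt]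
  omega

end Preorder

theorem mk_le_two_pow_of_coloring {α C : Type u} [LinearOrder α]
    (c : (shiftGraph α).Coloring C) : #α ≤ 2 ^ #C := by
  let F (x : α) : Set C := Set.range fun y : Set.Ioi x => c ⟨(x, y), y.2⟩
  have hF : Function.Injective F := .of_lt_imp_ne fun x y hxy hFxy => by
    obtain ⟨z, hz⟩ : c ⟨(x, y), hxy⟩ ∈ F y := hFxy ▸ ⟨⟨y, hxy⟩, rfl⟩
    exact c.valid (Or.inl rfl : (shiftGraph α).Adj ⟨(x, y), hxy⟩ ⟨(y, z), z.2⟩) hz.symm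
  simpa [Cardinal.mk_set] using Cardinal.mk_le_of_injective hF

theorem mk_vertex_nat_sumLex {β : Type} [Preorder β] (hβ : ℵ₀ ≤ #β) :
    #{p : (ℕ ⊕ₗ β) × (ℕ ⊕ₗ β) // p.1 < p.2} = #β := by
  apply le_antisymm
  · calc _ ≤ #((ℕ ⊕ₗ β) × (ℕ ⊕ₗ β)) := Cardinal.mk_subtype_le _
      _ = #β := by rw [Cardinal.mk_prod, Cardinal.lift_id, mk_nat_sumLex hβ, mul_eq_self hβ]
  · refine Cardinal.mk_le_of_injective (f := fun x : β =>
      ⟨(toLex (.inl 0), toLex (.inr x)), Sum.Lex.inl_lt_inr _ _⟩) fun x y hxy => ?_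
    simpa using congrArg (fun p => ofLex p.1.2) hxy

end shiftGraph

open shiftGraph in
theorem stmt_4 (lam : Cardinal) (hlam : ℵ₀ ≤ lam)
    (hstronglimit : ∀ μ : Cardinal, μ < lam → 2 ^ μ < lam) :
    ∃ (V : Type) (G : SimpleGraph V), #V = lam ∧
      -- (1) no proper coloring with fewer than `lam` colors
      (¬ ∃ (C : Type) (c : V → C), #C < lam ∧ ∀ x y : V, G.Adj x y → c x ≠ c y) ∧
      -- (2) triangle-free
      (¬ ∃ x y z : V, G.Adj x y ∧ G.Adj y z ∧ G.Adj x z) ∧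
      -- (3) the edge relation is stable
      (∃ n : ℕ, ¬ ContainsHalfGraph G n) ∧
      -- (4) the first-order theory of `G` is unstable: some formula has the order property in `G`
      (∃ (p q : ℕ) (φ : Language.graph.Formula (Fin p ⊕ Fin q)),
        ∀ k : ℕ, ∃ (a : Fin k → Fin p → V) (b : Fin k → Fin q → V),
          ∀ i j : Fin k,
            (@Formula.Realize Language.graph V G.structure _ φ (Sum.elim (a i) (b j))) ↔ i < j) := by
  have hβ : #(ord lam).ToType = lam := by rw [mk_toType, card_ord]
  have hβ' : ℵ₀ ≤ #(ord lam).ToType := hlam.trans hβ.ge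
  refine ⟨_, shiftGraph (ℕ ⊕ₗ (ord lam).ToType), (mk_vertex_nat_sumLex hβ').trans hβ,
    ?_, ?_, ⟨6, not_containsHalfGraph_six_of_adj_iff fun _ _ => adj_iff⟩,
    ⟨1, 1, commonNeighborFormula, exists_realize_commonNeighborFormula_iff_lt
      Sum.Lex.inl_strictMono⟩⟩
  · rintro ⟨C, c, hC, hc⟩
    have := mk_le_two_pow_of_coloring (SimpleGraph.Coloring.mk c (hc _ _))
    rw [mk_nat_sumLex hβ', hβ] at this
    exact (hstronglimit _ hC).not_ge this
  · rintro ⟨x, y, z, hxy, hyz, hxz⟩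
    exact not_adj_of_adj_of_adj hxy hyz hxz
end

section
/- Let G = (V, E) be a special graph. Then for every n ≥ 1, G does not contain all finite subgraphs of the shift graph Sh_n(ℕ): there exists a finite set S of vertices of Sh_n(ℕ) such that there is no injective map f : S → V with the property that whenever s, t ∈ S are adjacent in Sh_n(ℕ), f(s) and f(t) are adjacent in G. -/
open Cardinal

/-- `t` is the shift of `s`: `s_i = t_{i-1}` for all `1 ≤ i ≤ r-1`. -/
def IsShiftOf {A : Type} {r : ℕ} (s t : Fin r → A) : Prop :=
  ∀ (i : ℕ) (h : i + 1 < r), s ⟨i + 1, h⟩ = t ⟨i, Nat.lt_of_succ_lt h⟩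

/-- The shift graph `Sh_r(A)` on a linear order `A`: vertices are strictly increasing
`r`-tuples from `A`, and distinct vertices `s, t` are adjacent iff one is the shift
of the other. -/
def ShiftGraph (A : Type) [LinearOrder A] (r : ℕ) :
    SimpleGraph {s : Fin r → A // StrictMono s} where
  Adj s t := s ≠ t ∧ (IsShiftOf s.1 t.1 ∨ IsShiftOf t.1 s.1)
  symm := by
    constructor
    rintro s t ⟨hne, h⟩
    exact ⟨hne.symm, h.symm⟩
  loopless := by
    constructor
    rintro s ⟨hne, -⟩
    exact hne rfl

/-- The symmetric shift graph `Sh_r^sym(A)` on a set `A`: vertices are `r`-tuples of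
pairwise distinct elements of `A`, and distinct vertices `s, t` are adjacent iff one
is the shift of the other. -/
def SymShiftGraph (A : Type) (r : ℕ) :
    SimpleGraph {s : Fin r → A // Function.Injective s} where
  Adj s t := s ≠ t ∧ (IsShiftOf s.1 t.1 ∨ IsShiftOf t.1 s.1)
  symm := by
    constructor
    rintro s t ⟨hne, h⟩
    exact ⟨hne.symm, h.symm⟩
  loopless := by
    constructor
    rintro s ⟨hne, -⟩
    exact hne rfl
/-- A graph `G` is special if there is a (strict) partial order `≺` on its vertices such that
any two adjacent vertices are `≺`-comparable, and there is no circuit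
`x_0, …, x_{n-1}` (`n ≥ 3`, pairwise distinct, consecutive vertices adjacent, and `x_{n-1}`
adjacent to `x_0`) with `x_0 ≺ x_1 ≺ … ≺ x_m ≻ x_{m+1} ≻ … ≻ x_{n-1} ≻ x_0` for
some `0 < m < n - 1`. -/
def IsSpecialGraph {V : Type} (G : SimpleGraph V) : Prop :=
  ∃ lt : V → V → Prop,
    (∀ v : V, ¬ lt v v) ∧
    (∀ a b c : V, lt a b → lt b c → lt a c) ∧
    (∀ x y : V, G.Adj x y → lt x y ∨ lt y x) ∧
    ¬ ∃ (n : ℕ) (x : ℕ → V) (m : ℕ), 3 ≤ n ∧ 0 < m ∧ m < n - 1 ∧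
        (∀ i < n, ∀ j < n, x i = x j → i = j) ∧
        (∀ i : ℕ, i + 1 < n → G.Adj (x i) (x (i + 1))) ∧
        G.Adj (x (n - 1)) (x 0) ∧
        (∀ i < m, lt (x i) (x (i + 1))) ∧
        (∀ i : ℕ, m ≤ i → i + 1 < n → lt (x (i + 1)) (x i)) ∧
        lt (x 0) (x (n - 1))

/-!
Suppose `f` embeds the increasing `n`-tuples below `N` into `G`. Colour an increasing
`(n+1)`-tuple `u` by whether `f (u₀, …, uₙ₋₁) ≺ f (u₁, …, uₙ)`; the two `n`-tuples are adjacent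
in `Sh_n`, so their images are `≺`-comparable and the colour fixes the direction of that edge.
For `N` large, Ramsey's theorem gives `h₀ < ⋯ < h₂ₙ` all of whose increasing `(n+1)`-tuples have
the same colour. Then the consecutive `n`-windows of `h₀, …, h₂ₙ`, and those of the same sequence
with `hₙ` removed, are two `≺`-monotone paths from `(h₀, …, hₙ₋₁)` to `(hₙ₊₁, …, h₂ₙ)`. They are
internally disjoint, since every inner window of the first contains `hₙ`, so together they form
a circuit with a single minimum and a single maximum, which a special graph does not have.
-/

section Ramsey

open Finset

variable {α : Type*} [LinearOrder α]

def IsMonochromatic (C : Finset α → Bool) (r : ℕ) (H : Finset α) : Prop :=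
  ∃ c, ∀ s ⊆ H, s.card = r → C s = c

def IsMinHomogeneous (C : Finset α → Bool) (r : ℕ) (B : Finset α) : Prop :=
  ∃ c : α → Bool, ∀ a ∈ B, ∀ s ⊆ B.filter (a < ·), s.card = r → C (insert a s) = c a

theorem exists_isMinHomogeneous (r : ℕ)
    (ih : ∀ k, ∃ N, ∀ A : Finset α, N ≤ A.card → ∀ C,
      ∃ H ⊆ A, H.card = k ∧ IsMonochromatic C r H) (j : ℕ) :
    ∃ M, ∀ A : Finset α, M ≤ A.card → ∀ C,
      ∃ B ⊆ A, B.card = j ∧ IsMinHomogeneous C r B := by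
  induction j with
  | zero => exact ⟨0, fun A _ C => ⟨∅, empty_subset _, rfl, fun _ => true, by simp⟩⟩
  | succ j ihj =>
    obtain ⟨M, hM⟩ := ihj
    obtain ⟨N, hN⟩ := ih M
    refine ⟨N + 1, fun A hA C => ?_⟩
    have hne : A.Nonempty := card_pos.mp (by omega)
    set a := A.min' hne
    obtain ⟨A', hA'A, hA', c₀, hc₀⟩ :=
      hN (A.erase a) (by rw [card_erase_of_mem (min'_mem A hne)]; omega)
        (fun s => C (insert a s))
    obtain ⟨B, hBA', hB, c, hc⟩ := hM A' (by omega) C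
    have haB : a ∉ B := fun h => by simpa using hA'A (hBA' h)
    have ha_lt : ∀ x ∈ B, a < x := fun x hx =>
      lt_of_le_of_ne (A.min'_le x (mem_of_mem_erase (hA'A (hBA' hx)))) (fun h => haB (h ▸ hx))
    refine ⟨insert a B,
      insert_subset (min'_mem A hne) ((hBA'.trans hA'A).trans (erase_subset _ _)),
      by rw [card_insert_of_notMem haB, hB], fun x => if x = a then c₀ else c x, ?_⟩
    intro x hx s hs hsr
    have hsB : s ⊆ B.filter (x < ·) := fun y hy => by
      obtain ⟨hyB, hxy⟩ := mem_filter.mp (hs hy)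
      refine mem_filter.mpr ⟨(mem_insert.mp hyB).resolve_left ?_, hxy⟩
      rintro rfl
      rcases mem_insert.mp hx with rfl | hx
      · exact lt_irrefl _ hxy
      · exact lt_asymm hxy (ha_lt x hx)
    rcases mem_insert.mp hx with rfl | hx
    · simpa using hc₀ s ((hsB.trans (filter_subset _ _)).trans hBA') hsr
    · simpa [(ha_lt x hx).ne'] using hc x hx s hsB hsr

theorem exists_isMonochromatic (r k : ℕ) :
    ∃ N, ∀ A : Finset α, N ≤ A.card → ∀ C,
      ∃ H ⊆ A, H.card = k ∧ IsMonochromatic C r H := by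
  induction r generalizing k with
  | zero =>
    refine ⟨k, fun A hA C => ?_⟩
    obtain ⟨H, hHA, hH⟩ := exists_subset_card_eq hA
    exact ⟨H, hHA, hH, C ∅, fun s _ hs => by rw [card_eq_zero.mp hs]⟩
  | succ r ih =>
    obtain ⟨M, hM⟩ := exists_isMinHomogeneous r ih (2 * k)
    refine ⟨M, fun A hA C => ?_⟩
    obtain ⟨B, hBA, hB, c, hc⟩ := hM A hA C
    obtain ⟨b, -, hb⟩ := exists_le_card_fiber_of_mul_le_card_of_maps_to
      (s := B) (t := univ) (f := c) (n := k) (fun _ _ => mem_univ _) univ_nonempty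
      (by simp [hB, mul_comm])
    obtain ⟨H, hHB, hH⟩ := exists_subset_card_eq hb
    refine ⟨H, (hHB.trans (filter_subset _ _)).trans hBA, hH, b, fun s hs hsr => ?_⟩
    have hne : s.Nonempty := card_pos.mp (by omega)
    have hmin : s.min' hne ∈ B := (filter_subset _ _) (hHB (hs (min'_mem s hne)))
    rw [← insert_erase (min'_mem s hne),
      hc _ hmin _ (fun y hy => ?_) (by rw [card_erase_of_mem (min'_mem s hne), hsr]; rfl)]
    · exact (mem_filter.mp (hHB (hs (min'_mem s hne)))).2
    · obtain ⟨hne', hys⟩ := mem_erase.mp hy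
      exact mem_filter.mpr ⟨(filter_subset _ _) (hHB (hs hys)),
        lt_of_le_of_ne (s.min'_le y hys) (Ne.symm hne')⟩

theorem exists_strictMono_monochromatic (r k : ℕ) :
    ∃ N, ∀ C : (Fin r → ℕ) → Bool, ∃ h : ℕ → ℕ, StrictMono h ∧ (∀ i < k, h i < N) ∧
      ∃ c, ∀ g : Fin r → ℕ, StrictMono g → (∀ a, g a < k) → C (h ∘ g) = c := by
  obtain ⟨N, hN⟩ := exists_isMonochromatic (α := ℕ) r k
  refine ⟨N, fun C => ?_⟩
  obtain ⟨H, hHN, hH, c, hc⟩ := hN (range N) (card_range N).ge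
    fun s => if hs : s.card = r then C (s.orderEmbOfFin hs) else false
  have hHlt : ∀ i (hi : i < k), H.orderEmbOfFin hH ⟨i, hi⟩ < N :=
    fun i hi => mem_range.mp (hHN (orderEmbOfFin_mem _ _ _))
  -- extend the increasing enumeration of `H` beyond `N` to a strictly increasing sequence
  set h : ℕ → ℕ := fun i => if hi : i < k then H.orderEmbOfFin hH ⟨i, hi⟩ else N + i
  have hh : StrictMono h := strictMono_nat_of_lt_succ fun i => by
    simp only [h]
    split_ifs with h1 h2 h2
    · exact (H.orderEmbOfFin hH).strictMono (Fin.mk_lt_mk.mpr i.lt_succ_self)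
    · have := hHlt i h1; omega
    · omega
    · omega
  have hhH : ∀ i (hi : i < k), h i ∈ H := fun i hi => by
    simp only [h, dif_pos hi]; exact orderEmbOfFin_mem _ _ _
  refine ⟨h, hh, fun i hi => mem_range.mp (hHN (hhH i hi)), c, fun g hg hgk => ?_⟩
  set s := univ.image (h ∘ g)
  have hs : s.card = r := by
    rw [card_image_of_injective _ (hh.comp hg).injective, card_univ, Fintype.card_fin]
  have := hc s (fun x hx => by obtain ⟨a, -, rfl⟩ := mem_image.mp hx; exact hhH _ (hgk a)) hs
  simp only [dif_pos hs] at this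
  rwa [← orderEmbOfFin_unique hs (fun a => mem_image_of_mem _ (mem_univ a))
    (hh.comp hg)] at this

end Ramsey

section Circuit

variable {V : Type} {G : SimpleGraph V} {r : V → V → Prop}

/-- The circuits forbidden in `IsSpecialGraph`: `IsSpecialGraph G` says that some strict order `r`
in which adjacent vertices are comparable has `¬ HasUnimodalCircuit G r`. -/
def HasUnimodalCircuit (G : SimpleGraph V) (r : V → V → Prop) : Prop :=
  ∃ (n : ℕ) (x : ℕ → V) (m : ℕ), 3 ≤ n ∧ 0 < m ∧ m < n - 1 ∧
    (∀ i < n, ∀ j < n, x i = x j → i = j) ∧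
    (∀ i : ℕ, i + 1 < n → G.Adj (x i) (x (i + 1))) ∧
    G.Adj (x (n - 1)) (x 0) ∧
    (∀ i < m, r (x i) (x (i + 1))) ∧
    (∀ i : ℕ, m ≤ i → i + 1 < n → r (x (i + 1)) (x i)) ∧
    r (x 0) (x (n - 1))

def IsAscendingPath (G : SimpleGraph V) (r : V → V → Prop) (p : ℕ → V) (a : ℕ) : Prop :=
  ∀ i < a, G.Adj (p i) (p (i + 1)) ∧ r (p i) (p (i + 1))

namespace IsAscendingPath

variable {p : ℕ → V} {a : ℕ}

theorem rel_of_lt (htrans : ∀ x y z, r x y → r y z → r x z) (hp : IsAscendingPath G r p a)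
    {i j : ℕ} (hij : i < j) (hja : j ≤ a) : r (p i) (p j) := by
  induction j, hij using Nat.le_induction with
  | base => exact (hp i (by omega)).2
  | succ j _ ih => exact htrans _ _ _ (ih (by omega)) (hp j (by omega)).2

theorem injOn (hirr : ∀ x, ¬ r x x) (htrans : ∀ x y z, r x y → r y z → r x z)
    (hp : IsAscendingPath G r p a) : Set.InjOn p (Set.Iic a) := by
  intro i hi j hj hpij
  by_contra hne
  rcases Nat.lt_or_gt_of_ne hne with h | h
  · exact hirr (p j) (by simpa [hpij] using hp.rel_of_lt htrans h hj)
  · exact hirr (p i) (by simpa [hpij] using hp.rel_of_lt htrans h hi)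

theorem reverse (hp : IsAscendingPath G (flip r) p a) :
    IsAscendingPath G r (fun i => p (a - i)) a := by
  intro i hi
  have h := hp (a - (i + 1)) (by omega)
  rw [show a - (i + 1) + 1 = a - i by omega] at h
  exact ⟨h.1.symm, h.2⟩

end IsAscendingPath

theorem hasUnimodalCircuit_of_isAscendingPath (hirr : ∀ x, ¬ r x x)
    (htrans : ∀ x y z, r x y → r y z → r x z) {p q : ℕ → V} {a b : ℕ} (ha : 1 ≤ a) (hb : 2 ≤ b)
    (hp : IsAscendingPath G r p a) (hq : IsAscendingPath G r q b) (h0 : p 0 = q 0)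
    (hend : p a = q b) (hpq : ∀ i ≤ a, ∀ j, 0 < j → j < b → p i ≠ q j) :
    HasUnimodalCircuit G r := by
  set x : ℕ → V := fun i => if i ≤ a then p i else q (a + b - i)
  have hx_le : ∀ i ≤ a, x i = p i := fun i hi => if_pos hi
  have hx_ge : ∀ i, a ≤ i → x i = q (a + b - i) := fun i hi => by
    rcases hi.eq_or_lt with rfl | hi
    · rw [hx_le _ le_rfl, hend, Nat.add_sub_cancel_left]
    · exact if_neg (by omega)
  have hq_step : ∀ k, 0 < k → k ≤ b → G.Adj (q (k - 1)) (q k) ∧ r (q (k - 1)) (q k) :=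
    fun k hk hkb => by simpa [Nat.sub_add_cancel hk] using hq (k - 1) (by omega)
  refine ⟨a + b, x, a, by omega, by omega, by omega, fun i hi j hj hij => ?_, fun i hi => ?_,
    ?_, fun i hi => ?_, fun i hai hi => ?_, ?_⟩
  · rcases le_or_gt i a with hia | hia <;> rcases le_or_gt j a with hja | hja
    · rw [hx_le i hia, hx_le j hja] at hij
      exact hp.injOn hirr htrans hia hja hij
    · rw [hx_le i hia, hx_ge j hja.le] at hij
      exact absurd hij (hpq i hia _ (by omega) (by omega))
    · rw [hx_ge i hia.le, hx_le j hja] at hij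
      exact absurd hij.symm (hpq j hja _ (by omega) (by omega))
    · rw [hx_ge i hia.le, hx_ge j hja.le] at hij
      have := hq.injOn hirr htrans (show a + b - i ≤ b by omega)
        (show a + b - j ≤ b by omega) hij
      omega
  · rcases lt_or_ge i a with hia | hia
    · rw [hx_le i hia.le, hx_le (i + 1) hia]
      exact (hp i hia).1
    · rw [hx_ge i hia, hx_ge (i + 1) (by omega), show a + b - (i + 1) = a + b - i - 1 by omega]
      exact (hq_step _ (by omega) (by omega)).1.symm
  · rw [hx_ge (a + b - 1) (by omega), hx_le 0 (Nat.zero_le _), h0,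
      show a + b - (a + b - 1) = 1 by omega]
    exact (hq 0 (by omega)).1.symm
  · rw [hx_le i hi.le, hx_le (i + 1) hi]
    exact (hp i hi).2
  · rw [hx_ge i hai, hx_ge (i + 1) (by omega), show a + b - (i + 1) = a + b - i - 1 by omega]
    exact (hq_step _ (by omega) (by omega)).2
  · rw [hx_ge (a + b - 1) (by omega), hx_le 0 (Nat.zero_le _), h0,
      show a + b - (a + b - 1) = 1 by omega]
    exact (hq 0 (by omega)).2

theorem hasUnimodalCircuit_of_isAscendingPath_cond (hirr : ∀ x, ¬ r x x)
    (htrans : ∀ x y z, r x y → r y z → r x z) (c : Bool) {p q : ℕ → V} {a b : ℕ} (ha : 1 ≤ a)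
    (hb : 2 ≤ b) (hp : IsAscendingPath G (cond c r (flip r)) p a)
    (hq : IsAscendingPath G (cond c r (flip r)) q b) (h0 : p 0 = q 0) (hend : p a = q b)
    (hpq : ∀ i ≤ a, ∀ j, 0 < j → j < b → p i ≠ q j) :
    HasUnimodalCircuit G r := by
  cases c
  · refine hasUnimodalCircuit_of_isAscendingPath hirr htrans ha hb hp.reverse hq.reverse
      (by simpa using hend) (by simpa using h0) fun i hi j hj hjb => hpq _ (by omega) _ ?_ ?_ <;>
      omega
  · exact hasUnimodalCircuit_of_isAscendingPath hirr htrans ha hb hp hq h0 hend hpq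

end Circuit

section Windows

variable {V : Type} {G : SimpleGraph V} {r : V → V → Prop} {n N : ℕ}

def boxedTuples (n N : ℕ) : Set {s : Fin n → ℕ // StrictMono s} := {s | ∀ i, s.1 i < N}

theorem finite_boxedTuples (n N : ℕ) : (boxedTuples n N).Finite :=
  ((Set.Finite.pi fun _ : Fin n => Set.finite_Iio N).preimage Subtype.val_injective.injOn).subset
    fun _ hs => Set.mem_univ_pi.mpr hs

def window (e : ℕ → ℕ) (he : StrictMono e) (n j : ℕ) : {s : Fin n → ℕ // StrictMono s} :=
  ⟨fun i => e (j + i), he.comp fun _ _ h => Nat.add_lt_add_left h j⟩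

theorem shiftGraph_adj_window {e : ℕ → ℕ} (he : StrictMono e) (hn : 1 ≤ n) (j : ℕ) :
    (ShiftGraph ℕ n).Adj (window e he n j) (window e he n (j + 1)) := by
  refine ⟨fun h => ?_, Or.inl fun i _ => congrArg e (by show j + (i + 1) = j + 1 + i; omega)⟩
  have := he.injective (congrArg (fun s => s.1 ⟨0, hn⟩) h)
  omega

open Classical in
noncomputable def shiftColoring (r : V → V → Prop) (f : {s : Fin n → ℕ // StrictMono s} → V)
    (u : Fin (n + 1) → ℕ) : Bool :=
  decide (∃ hu : StrictMono u, r (f ⟨Fin.init u, hu.comp Fin.strictMono_castSucc⟩)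
    (f ⟨Fin.tail u, hu.comp Fin.strictMono_succ⟩))

theorem shiftColoring_window_eq_true {f : {s : Fin n → ℕ // StrictMono s} → V} {e : ℕ → ℕ}
    (he : StrictMono e) (j : ℕ) :
    shiftColoring r f (window e he (n + 1) j).1 = true ↔
      r (f (window e he n j)) (f (window e he n (j + 1))) := by
  have htail : (⟨Fin.tail (window e he (n + 1) j).1,
      (window e he (n + 1) j).2.comp Fin.strictMono_succ⟩ : {s : Fin n → ℕ // StrictMono s}) =
      window e he n (j + 1) :=
    Subtype.ext (funext fun i => congrArg e (by simp only [Fin.val_succ]; omega))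
  simp only [shiftColoring, decide_eq_true_eq, exists_prop_of_true (window e he (n + 1) j).2,
    htail]
  rfl

theorem isAscendingPath_window (hcmp : ∀ x y, G.Adj x y → r x y ∨ r y x) (hn : 1 ≤ n)
    {f : {s : Fin n → ℕ // StrictMono s} → V}
    (hf : ∀ s ∈ boxedTuples n N, ∀ t ∈ boxedTuples n N,
      (ShiftGraph ℕ n).Adj s t → G.Adj (f s) (f t))
    {e : ℕ → ℕ} (he : StrictMono e) {L : ℕ} (heN : ∀ t < L + n, e t < N) {c : Bool}
    (hc : ∀ j < L, shiftColoring r f (window e he (n + 1) j).1 = c) :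
    IsAscendingPath G (cond c r (flip r)) (fun j => f (window e he n j)) L := by
  intro j hj
  have hadj := hf _ (fun i => heN _ (by omega)) _ (fun i => heN _ (by omega))
    (shiftGraph_adj_window he hn j)
  refine ⟨hadj, ?_⟩
  have hcj := hc j hj
  cases c
  · rw [Bool.eq_false_iff, ne_eq, shiftColoring_window_eq_true] at hcj
    exact (hcmp _ _ hadj).resolve_left hcj
  · exact (shiftColoring_window_eq_true he j).mp hcj

end Windows

def skipIndex (m t : ℕ) : ℕ := if t < m then t else t + 1

theorem strictMono_skipIndex (m : ℕ) : StrictMono (skipIndex m) := fun a b h => by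
  unfold skipIndex; split_ifs <;> omega

theorem hasUnimodalCircuit_of_monochromatic {V : Type} {G : SimpleGraph V} {r : V → V → Prop}
    {n N : ℕ} (hirr : ∀ x, ¬ r x x) (htrans : ∀ x y z, r x y → r y z → r x z)
    (hcmp : ∀ x y, G.Adj x y → r x y ∨ r y x) (hn : 1 ≤ n)
    {f : {s : Fin n → ℕ // StrictMono s} → V} (hinj : Set.InjOn f (boxedTuples n N))
    (hf : ∀ s ∈ boxedTuples n N, ∀ t ∈ boxedTuples n N,
      (ShiftGraph ℕ n).Adj s t → G.Adj (f s) (f t))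
    {h : ℕ → ℕ} (hh : StrictMono h) (hhN : ∀ i < 2 * n + 1, h i < N) {c : Bool}
    (hc : ∀ g : Fin (n + 1) → ℕ, StrictMono g → (∀ a, g a < 2 * n + 1) →
      shiftColoring r f (h ∘ g) = c) :
    HasUnimodalCircuit G r := by
  have hs := strictMono_skipIndex n
  have hs_lt : ∀ t < 2 * n, skipIndex n t < 2 * n + 1 := fun t _ => by
    unfold skipIndex; split_ifs <;> omega
  have hX := isAscendingPath_window hcmp hn hf (hh.comp hs) (L := n)
    (fun t ht => hhN _ (hs_lt t (by omega)))
    fun j _ => hc _ (window _ hs (n + 1) j).2 fun a => hs_lt _ (by omega)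
  have hY := isAscendingPath_window hcmp hn hf hh (L := n + 1) (fun t ht => hhN t (by omega))
    fun j hj => hc _ (window _ strictMono_id (n + 1) j).2 fun a => by
      show j + (a : ℕ) < 2 * n + 1; omega
  refine hasUnimodalCircuit_of_isAscendingPath_cond hirr htrans c hn (by omega) hX hY
    (congrArg f (Subtype.ext (funext fun i => congrArg h (if_pos (by simp)))))
    (congrArg f (Subtype.ext (funext fun i =>
      congrArg h ((if_neg (by simp)).trans (by omega)))))
    fun i hi j hj0 hjn heq => ?_
  -- the window of `h` at `j ∈ (0, n]` contains `h n`, which no window of `h ∘ skipIndex n` does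
  have hw := congrArg (fun s => s.1 ⟨n - j, by omega⟩)
    (hinj (fun k => hhN _ (hs_lt _ (by omega))) (fun k => hhN _ (by omega)) heq)
  have := hh.injective hw
  simp only [skipIndex] at this
  split_ifs at this <;> omega

theorem stmt_5 (V : Type) (G : SimpleGraph V) (hG : IsSpecialGraph G)
    (n : ℕ) (hn : 1 ≤ n) :
    ∃ S : Finset {s : Fin n → ℕ // StrictMono s},
      ¬ ∃ f : {s : Fin n → ℕ // StrictMono s} → V,
        Set.InjOn f ↑S ∧
        ∀ s ∈ S, ∀ t ∈ S, (ShiftGraph ℕ n).Adj s t → G.Adj (f s) (f t) := by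
  obtain ⟨lt, hirr, htrans, hcmp, hnoc⟩ := hG
  obtain ⟨N, hN⟩ := exists_strictMono_monochromatic (n + 1) (2 * n + 1)
  refine ⟨(finite_boxedTuples n N).toFinset, fun ⟨f, hinj, hf⟩ => ?_⟩
  rw [Set.Finite.coe_toFinset] at hinj
  simp only [Set.Finite.mem_toFinset] at hf
  obtain ⟨h, hh, hhN, c, hc⟩ := hN (shiftColoring lt f)
  exact hnoc (hasUnimodalCircuit_of_monochromatic hirr htrans hcmp hn hinj hf hh hhN hc)
end

section
/- There exists a simple graph G = (V, E) with |V| = 2^{ℵ₀} such that: (1) G is special; (2) the chromatic number of G is ℵ₁, i.e. G has a proper coloring with colors in a set of cardinality ℵ₁ but no proper coloring with colors in a countable set; and (3) the edge relation of G has the independence property: for every n < ω there are vertices x_0,…,x_{n−1} of G and, for every subset S ⊆ {0,…,n−1}, a vertex y_S such that y_S is adjacent to x_i if and only if i ∈ S. -/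
open Cardinal

/-!
Vertices are well-founded countably branching trees whose leaves carry reals, and a node is
joined to its children only when distinct children have disjoint cones (the sets of hereditary
subtrees). Ordered by "is a proper subtree of", adjacent vertices are comparable, and the peak of
a forbidden circuit would have two distinct children whose cones both contain the bottom vertex.

The rank in the subtree order is a countable ordinal separating adjacent vertices, which gives an
`ℵ₁`-colouring. Given a colouring by a countable set, let `K` be the colours carried by
uncountably many trees with pairwise disjoint cones. Choosing children, one from each such family
and one leaf, while avoiding the countably many cones used so far, produces uncountably many nodes
with pairwise disjoint cones. Each of them is adjacent to a vertex of every colour in `K`, yet by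
pigeonhole uncountably many of them share a colour, which then lies in `K`.

Every countable set of leaves is exactly the set of leaves adjacent to some vertex, which gives
the independence property.
-/

inductive CTree : Type
  | leaf : (ℕ → Bool) → CTree
  | node : (ℕ → CTree) → CTree

namespace CTree

open Relation Set

def IsChild (x y : CTree) : Prop := ∃ f, y = node f ∧ x ∈ range f

theorem isChild_node {f : ℕ → CTree} (k : ℕ) : IsChild (f k) (node f) := ⟨f, rfl, k, rfl⟩

theorem isChild_wellFounded : WellFounded IsChild := by
  refine ⟨fun t => ?_⟩
  induction t with
  | leaf => exact ⟨_, fun _ ⟨_, h, _⟩ => nomatch h⟩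
  | node f ih =>
    refine ⟨_, fun _ ⟨_, h, k, hk⟩ => ?_⟩
    cases h
    exact hk ▸ ih k

instance : IsWellFounded CTree IsChild := ⟨isChild_wellFounded⟩

def cone (y : CTree) : Set CTree := {x | ReflTransGen IsChild x y}

theorem mem_cone_self (y : CTree) : y ∈ cone y := ReflTransGen.refl

theorem cone_subset_cone {x y : CTree} (h : x ∈ cone y) : cone x ⊆ cone y :=
  fun _ hz => ReflTransGen.trans hz h

theorem cone_leaf (a : ℕ → Bool) : cone (leaf a) = {leaf a} := by
  ext x
  refine ⟨fun h => ?_, fun h => h ▸ mem_cone_self _⟩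
  rcases h.cases_tail with h | ⟨_, _, f, h, _⟩
  · exact h.symm
  · exact nomatch h

theorem cone_node (f : ℕ → CTree) : cone (node f) = insert (node f) (⋃ k, cone (f k)) := by
  ext x
  constructor
  · intro h
    rcases h.cases_tail with h | ⟨_, hx, g, h, k, rfl⟩
    · exact Or.inl h.symm
    · cases h
      exact Or.inr (mem_iUnion.2 ⟨k, hx⟩)
  · rintro (rfl | hx)
    · exact mem_cone_self _
    · obtain ⟨k, hk⟩ := mem_iUnion.1 hx
      exact cone_subset_cone (ReflTransGen.single (isChild_node k)) hk

theorem countable_cone (t : CTree) : (cone t).Countable := by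
  induction t with
  | leaf a => simp [cone_leaf]
  | node f ih => simpa [cone_node] using countable_iUnion ih

theorem not_transGen_isChild_self (t : CTree) : ¬ TransGen IsChild t t :=
  isChild_wellFounded.transGen.irrefl.irrefl t

def IsEligibleChild (x y : CTree) : Prop :=
  ∃ f, (range f).PairwiseDisjoint cone ∧ y = node f ∧ x ∈ range f

theorem IsEligibleChild.isChild {x y : CTree} (h : IsEligibleChild x y) : IsChild x y :=
  let ⟨f, _, hy, hx⟩ := h; ⟨f, hy, hx⟩

def graph : SimpleGraph CTree := SimpleGraph.fromRel IsEligibleChild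

theorem IsEligibleChild.adj {x y : CTree} (h : IsEligibleChild x y) : graph.Adj y x :=
  (SimpleGraph.fromRel_adj _ _ _).2
    ⟨fun hyx => not_transGen_isChild_self x (.single (hyx ▸ h.isChild)), Or.inr h⟩

theorem IsEligibleChild.of_adj_of_transGen {x y : CTree} (hadj : graph.Adj x y)
    (hxy : TransGen IsChild x y) : IsEligibleChild x y := by
  refine ((SimpleGraph.fromRel_adj _ _ _).1 hadj).2.resolve_right fun hyx => ?_
  exact not_transGen_isChild_self x (hxy.tail hyx.isChild)

theorem isSpecialGraph_graph : IsSpecialGraph graph := by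
  refine ⟨TransGen IsChild, not_transGen_isChild_self, fun _ _ _ => TransGen.trans,
    fun x y hadj => ?_, ?_⟩
  · rcases ((SimpleGraph.fromRel_adj _ _ _).1 hadj).2 with h | h
    exacts [Or.inl (.single h.isChild), Or.inr (.single h.isChild)]
  rintro ⟨n, x, m, -, hm0, hmn, hinj, hadj, hlast, hup, hdn, h0⟩
  have child_up : ∀ i < m, IsEligibleChild (x i) (x (i + 1)) := fun i hi =>
    .of_adj_of_transGen (hadj i (by omega)) (hup i hi)
  have child_down : ∀ i, m ≤ i → i + 1 < n → IsEligibleChild (x (i + 1)) (x i) :=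
    fun i hi hin => .of_adj_of_transGen (hadj i hin).symm (hdn i hi hin)
  -- the peak `x m` has the two distinct children `x (m - 1)` and `x (m + 1)`, whose cones
  -- both contain `x 0`
  obtain ⟨f, hf, hxm, k, hk⟩ := child_up (m - 1) (by omega)
  obtain ⟨f', -, hxm', k', hk'⟩ := child_down m le_rfl (by omega)
  rw [Nat.sub_add_cancel hm0] at hxm
  obtain rfl : f' = f := node.inj (hxm'.symm.trans hxm)
  have hleft : x 0 ∈ cone (x (m - 1)) :=
    (reflTransGen_of_succ_of_le (fun i j => IsChild (x i) (x j))
      (fun i hi => (child_up i (by simp at hi; omega)).isChild) (Nat.zero_le _)).lift x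
      fun _ _ => id
  have hright : x (n - 1) ∈ cone (x (m + 1)) :=
    (reflTransGen_of_succ_of_ge (fun i j => IsChild (x i) (x j))
      (fun i hi => (child_down i (by simp at hi; omega) (by simp at hi; omega)).isChild)
      (by omega)).lift x fun _ _ => id
  have hbottom : x 0 ∈ cone (x (n - 1)) :=
    .single (IsEligibleChild.of_adj_of_transGen hlast.symm h0).isChild
  have hne : x (m - 1) ≠ x (m + 1) := fun h => by have := hinj _ (by omega) _ (by omega) h; omega
  refine hne ?_
  rw [← hk, ← hk']
  exact hf.elim_set ⟨k, rfl⟩ ⟨k', rfl⟩ (x 0) (hk ▸ hleft)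
    (hk' ▸ cone_subset_cone hright hbottom)

theorem rank_lt_ord_aleph_one (t : CTree) : IsWellFounded.rank IsChild t < (ℵ₁).ord := by
  induction t using isChild_wellFounded.induction with
  | _ t ih =>
    rw [IsWellFounded.rank_eq]
    refine Ordinal.iSup_lt_of_lt_cof ?_ fun b =>
      (isSuccLimit_ord (aleph0_le_aleph 1)).succ_lt (ih b b.2)
    rw [isRegular_aleph_one.cof_ord, lt_aleph_one_iff, mk_le_aleph0_iff]
    exact ((countable_cone t).mono fun b (hb : IsChild b t) => .single hb).to_subtype

theorem exists_coloring_card_eq_aleph_one :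
    ∃ (C : Type) (c : CTree → C), #C = ℵ₁ ∧ ∀ x y, graph.Adj x y → c x ≠ c y := by
  refine ⟨(ℵ₁).ord.ToType, fun t => Ordinal.ToType.mk ⟨_, rank_lt_ord_aleph_one t⟩,
    by rw [mk_toType, card_ord], fun x y hadj hc => ?_⟩
  have hrank := congrArg Subtype.val ((Ordinal.ToType.mk).injective hc)
  rcases ((SimpleGraph.fromRel_adj _ _ _).1 hadj).2 with h | h
  exacts [(IsWellFounded.rank_lt_of_rel h.isChild).ne hrank,
    (IsWellFounded.rank_lt_of_rel h.isChild).ne' hrank]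

def labelAt : CTree → List ℕ → Option (ℕ → Bool)
  | leaf a, [] => some a
  | node _, [] => none
  | leaf _, _ :: _ => none
  | node f, k :: p => labelAt (f k) p

theorem labelAt_injective : Function.Injective labelAt := by
  intro s
  induction s with
  | leaf a =>
    rintro (b | g) h <;> have := congrFun h [] <;> simp_all [labelAt]
  | node f ih =>
    rintro (b | g) h
    · simpa [labelAt] using congrFun h []
    · exact congrArg node (funext fun k => ih k (funext fun p => congrFun h (k :: p)))

theorem mk_eq_two_power_aleph0 : #CTree = 2 ^ ℵ₀ := by
  have hleaf : #(ℕ → Bool) = 𝔠 := by simp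
  rw [two_power_aleph0]
  refine le_antisymm ?_ (hleaf ▸ mk_le_of_injective fun _ _ => leaf.inj)
  calc #CTree ≤ #(List ℕ → Option (ℕ → Bool)) := mk_le_of_injective labelAt_injective
    _ = 𝔠 := by
      rw [← power_def, mk_option, hleaf, mk_list_eq_aleph0, ← Nat.cast_one, continuum_add_nat,
        continuum_power_aleph0]

theorem not_countable_range_leaf : ¬ (range leaf).Countable := by
  rw [← le_aleph0_iff_set_countable, mk_range_eq _ fun _ _ => leaf.inj]
  simpa using cantor ℵ₀

theorem pairwiseDisjoint_cone_range_leaf : (range leaf).PairwiseDisjoint cone := by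
  rintro _ ⟨a, rfl⟩ _ ⟨b, rfl⟩ hab
  simpa [Function.onFun, cone_leaf] using hab

theorem not_isEligibleChild_leaf (x : CTree) (a : ℕ → Bool) : ¬ IsEligibleChild x (leaf a) :=
  fun ⟨_, _, h, _⟩ => nomatch h

theorem isEligibleChild_node_iff {f : ℕ → CTree} (hf : (range f).PairwiseDisjoint cone)
    {x : CTree} :
    IsEligibleChild x (node f) ↔ x ∈ range f :=
  ⟨fun ⟨_, _, h, hx⟩ => node.inj h ▸ hx, fun hx => ⟨f, hf, rfl, hx⟩⟩

theorem exists_adj_leaf_iff {s : Set CTree} (hs : s.Countable) (hsl : s ⊆ range leaf) :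
    ∃ y, ∀ a, graph.Adj y (leaf a) ↔ leaf a ∈ s := by
  obtain rfl | hne := s.eq_empty_or_nonempty
  · refine ⟨leaf fun _ => false, fun a => ?_⟩
    simp [graph, not_isEligibleChild_leaf]
  obtain ⟨f, rfl⟩ := hs.exists_eq_range hne
  refine ⟨node f, fun a => ?_⟩
  simp [graph, isEligibleChild_node_iff (pairwiseDisjoint_cone_range_leaf.subset hsl),
    not_isEligibleChild_leaf]

theorem exists_independent_family (ι : Type) [Countable ι] :
    ∃ x : ι → CTree, ∀ S : Set ι, ∃ y, ∀ i, graph.Adj y (x i) ↔ i ∈ S := by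
  obtain ⟨g, hg⟩ := Countable.exists_injective_nat ι
  let x (i : ι) : CTree := leaf fun m => decide (m = g i)
  have hx : Function.Injective x := fun i j h => hg (by simpa using congrFun (leaf.inj h) (g i))
  refine ⟨x, fun S => ?_⟩
  obtain ⟨y, hy⟩ := exists_adj_leaf_iff (S.to_countable.image x)
    ((image_subset_range x S).trans (range_comp_subset_range _ leaf))
  exact ⟨y, fun i => (hy _).trans hx.mem_set_image⟩

theorem countable_setOf_not_disjoint_cone {A : Set CTree} (hA : A.PairwiseDisjoint cone)
    {U : Set CTree} (hU : U.Countable) : {a ∈ A | ¬ Disjoint (cone a) U}.Countable := by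
  refine (hU.biUnion fun u _ => Subsingleton.countable (s := {a ∈ A | u ∈ cone a})
    fun a ha b hb => hA.elim_set ha.1 hb.1 u ha.2 hb.2).mono fun a ⟨ha, hdis⟩ => ?_
  obtain ⟨u, hua, huU⟩ := not_disjoint_iff.1 hdis
  exact mem_biUnion huU ⟨ha, hua⟩

theorem exists_disjoint_cone {A : Set CTree} (hA : ¬ A.Countable) (hd : A.PairwiseDisjoint cone)
    {U : Set CTree} (hU : U.Countable) : ∃ a ∈ A, Disjoint (cone a) U := by
  by_contra! h
  exact hA ((countable_setOf_not_disjoint_cone hd hU).mono fun a ha =>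
    show _ ∧ _ from ⟨ha, h a ha⟩)

theorem exists_fresh_children {A : ℕ → Set CTree} (hA : ∀ j, ¬ (A j).Countable)
    (hd : ∀ j, (A j).PairwiseDisjoint cone) {U : Set CTree} (hU : U.Countable) :
    ∃ f : ℕ → CTree, (∀ j, f j ∈ A j) ∧ (range f).PairwiseDisjoint cone ∧
      ∀ j, Disjoint (cone (f j)) U := by
  choose pick hpickA hpickU using
    fun j (V : {V : Set CTree // V.Countable}) => exists_disjoint_cone (hA j) (hd j) V.2
  -- `used n` is `U` together with the cones of the first `n` children
  let used (n : ℕ) : {V : Set CTree // V.Countable} :=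
    Nat.rec ⟨U, hU⟩ (fun j V => ⟨V ∪ cone (pick j V), V.2.union (countable_cone _)⟩) n
  have hmono : Monotone fun n => (used n).1 :=
    monotone_nat_of_le_succ fun _ => subset_union_left
  have hdisj : ∀ i j, i < j → Disjoint (cone (pick i (used i))) (cone (pick j (used j))) :=
    fun i j hij => (hpickU j (used j)).symm.mono_left (subset_union_right.trans (hmono hij))
  refine ⟨fun j => pick j (used j), fun j => hpickA _ _,
    Pairwise.range_pairwise fun i j hij => ?_, fun j => (hpickU j _).mono_right (hmono j.zero_le)⟩
  rcases hij.lt_or_gt with h | h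
  exacts [hdisj i j h, (hdisj j i h).symm]

theorem disjoint_cone_node {f : ℕ → CTree} {t : CTree}
    (hf : ∀ k, Disjoint (cone (f k)) (cone t)) : Disjoint (cone (node f)) (cone t) := by
  rw [cone_node, disjoint_insert_left, disjoint_iUnion_left]
  refine ⟨fun h => ?_, hf⟩
  exact disjoint_left.1 (hf 0) (mem_cone_self _)
    (cone_subset_cone h (.single (isChild_node 0)))

theorem exists_uncountable_pairwiseDisjoint_nodes {A : ℕ → Set CTree}
    (hA : ∀ j, ¬ (A j).Countable) (hd : ∀ j, (A j).PairwiseDisjoint cone) :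
    ∃ Z : Set CTree, ¬ Z.Countable ∧ Z.PairwiseDisjoint cone ∧ ∀ z ∈ Z,
      ∃ f, (range f).PairwiseDisjoint cone ∧ z = node f ∧ ∀ j, f j ∈ A j := by
  let nodes : Set CTree :=
    {z | ∃ f, (range f).PairwiseDisjoint cone ∧ z = node f ∧ ∀ j, f j ∈ A j}
  obtain ⟨M, hM⟩ := zorn_subset {Z | Z ⊆ nodes ∧ Z.PairwiseDisjoint cone} fun c hc hchain =>
    ⟨⋃₀ c, ⟨sUnion_subset fun Z hZ => (hc hZ).1,
      (pairwiseDisjoint_sUnion hchain.directedOn).2 fun Z hZ => (hc hZ).2⟩,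
      fun _ => subset_sUnion_of_mem⟩
  refine ⟨M, fun hMc => ?_, hM.prop.2, hM.prop.1⟩
  obtain ⟨f, hfA, hfd, hfU⟩ :=
    exists_fresh_children hA hd (hMc.biUnion fun m _ => countable_cone m)
  have hdisj : ∀ m ∈ M, Disjoint (cone (node f)) (cone m) := fun m hm =>
    disjoint_cone_node fun k => (hfU k).mono_right (subset_biUnion_of_mem hm)
  have hnotin : node f ∉ M := fun h =>
    disjoint_left.1 (hdisj _ h) (mem_cone_self _) (mem_cone_self _)
  refine hnotin (hM.2 ⟨insert_subset ⟨f, hfd, rfl, hfA⟩ hM.prop.1,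
    hM.prop.2.insert fun m hm _ => hdisj m hm⟩ (subset_insert _ _) (mem_insert _ _))

theorem not_forall_adj_ne_of_countable {C : Type*} [Countable C] (c : CTree → C) :
    ¬ ∀ x y, graph.Adj x y → c x ≠ c y := by
  intro hc
  let K : Set C :=
    {m | ∃ A : Set CTree, ¬ A.Countable ∧ A.PairwiseDisjoint cone ∧ ∀ a ∈ A, c a = m}
  choose F hFc hFd hFm using fun m : K => m.2
  obtain ⟨e, he⟩ := exists_surjective_nat (Option K)
  -- the leaves are added as a family so that there is at least one family to choose from
  let A (j : ℕ) : Set CTree := (e j).elim (range leaf) F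
  have hA : ∀ j, ¬ (A j).Countable ∧ (A j).PairwiseDisjoint cone := fun j => by
    simp only [A]
    cases e j with
    | none => exact ⟨not_countable_range_leaf, pairwiseDisjoint_cone_range_leaf⟩
    | some m => exact ⟨hFc m, hFd m⟩
  obtain ⟨Z, hZc, hZd, hZ⟩ :=
    exists_uncountable_pairwiseDisjoint_nodes (fun j => (hA j).1) (fun j => (hA j).2)
  obtain ⟨m, hm⟩ : ∃ m, ¬ {z ∈ Z | c z = m}.Countable := by
    by_contra! h
    exact hZc ((countable_iUnion h).mono fun z hz =>
      mem_iUnion.2 ⟨c z, show _ ∧ _ from ⟨hz, rfl⟩⟩)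
  have hmK : m ∈ K := ⟨_, hm, hZd.subset (sep_subset _ _), fun _ h => h.2⟩
  obtain ⟨j, hj⟩ := he (some ⟨m, hmK⟩)
  obtain ⟨z, hzZ, hzm⟩ : {z ∈ Z | c z = m}.Nonempty :=
    nonempty_iff_ne_empty.2 fun h => hm (h ▸ countable_empty)
  obtain ⟨f, hfd, rfl, hfA⟩ := hZ z hzZ
  have hfj : c (f j) = m := hFm _ _ (by simpa [A, hj] using hfA j)
  exact hc _ _ (show IsEligibleChild (f j) (node f) from ⟨f, hfd, rfl, j, rfl⟩).adj
    (hzm.trans hfj.symm)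

end CTree

theorem stmt_6 :
    ∃ (V : Type) (G : SimpleGraph V), #V = 2 ^ ℵ₀ ∧
      -- (1) `G` is special
      IsSpecialGraph G ∧
      -- (2) the chromatic number of `G` is `ℵ₁`
      (∃ (C : Type) (c : V → C), #C = aleph 1 ∧ ∀ x y : V, G.Adj x y → c x ≠ c y) ∧
      (¬ ∃ (C : Type) (c : V → C), #C ≤ ℵ₀ ∧ ∀ x y : V, G.Adj x y → c x ≠ c y) ∧
      -- (3) the edge relation has the independence property
      (∀ n : ℕ, ∃ x : Fin n → V, ∀ S : Set (Fin n), ∃ y : V,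
        ∀ i : Fin n, G.Adj y (x i) ↔ i ∈ S) := by
  refine ⟨CTree, CTree.graph, CTree.mk_eq_two_power_aleph0, CTree.isSpecialGraph_graph,
    CTree.exists_coloring_card_eq_aleph_one, fun ⟨C, c, hC, hc⟩ => ?_,
    fun n => CTree.exists_independent_family (Fin n)⟩
  have : Countable C := mk_le_aleph0_iff.1 hC
  exact CTree.not_forall_adj_ne_of_countable c hc
end

section
/- There exists n < ω such that for every linear order A, the shift graph Sh_2(A) contains no half-graph of height n; that is, the edge relation of Sh_2(A) is stable, uniformly in A. -/
theorem Fin.exists_three_eq_of_bool (f : Fin 5 → Bool) :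
    ∃ i j k : Fin 5, i < j ∧ j < k ∧ f i = f j ∧ f j = f k := by
  revert f
  decide

/-- The ordered form of `R(3,3) ≤ 6`. -/
theorem Fin.exists_monochromatic_triangle (c : Fin 6 → Fin 6 → Bool) :
    ∃ i j k : Fin 6, i < j ∧ j < k ∧ c i j = c i k ∧ c i j = c j k := by
  obtain ⟨x, y, z, hxy, hyz, hcxy, hcyz⟩ :=
    Fin.exists_three_eq_of_bool fun j => c 0 j.succ
  have hxy' : x.succ < y.succ := Fin.succ_lt_succ_iff.mpr hxy
  have hyz' : y.succ < z.succ := Fin.succ_lt_succ_iff.mpr hyz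
  by_cases h₁ : c 0 x.succ = c x.succ y.succ
  · exact ⟨0, x.succ, y.succ, x.succ_pos, hxy', hcxy, h₁⟩
  by_cases h₂ : c 0 x.succ = c x.succ z.succ
  · exact ⟨0, x.succ, z.succ, x.succ_pos, hxy'.trans hyz', hcxy.trans hcyz, h₂⟩
  by_cases h₃ : c 0 y.succ = c y.succ z.succ
  · exact ⟨0, y.succ, z.succ, y.succ_pos, hyz', hcyz, h₃⟩
  -- Otherwise all three pairs among `x, y, z` get the colour opposite to the one of `0`.
  have eq_of_ne_of_ne : ∀ {p q r : Bool}, r ≠ p → r ≠ q → p = q := by decide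
  rw [hcxy] at h₁ h₂
  exact ⟨x.succ, y.succ, z.succ, hxy', hyz', eq_of_ne_of_ne h₁ h₂, eq_of_ne_of_ne h₁ h₃⟩

theorem isShiftOf_two_iff {A : Type} {s t : Fin 2 → A} : IsShiftOf s t ↔ s 1 = t 0 :=
  ⟨fun h => h 0 (by norm_num), fun h i hi => by obtain rfl : i = 0 := (by omega); exact h⟩

theorem ShiftGraph.adj_two_iff {A : Type} [LinearOrder A] {s t : {s : Fin 2 → A // StrictMono s}} :
    (ShiftGraph A 2).Adj s t ↔ s.1 1 = t.1 0 ∨ t.1 1 = s.1 0 := by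
  simp only [ShiftGraph, isShiftOf_two_iff, and_iff_right_iff_imp]
  rintro (h | h) rfl
  all_goals exact (s.2 (show (0 : Fin 2) < 1 by norm_num)).ne (by rw [h])

def SimpleGraph.IsHalfGraph {V ι : Type} [LT ι] (G : SimpleGraph V) (a b : ι → V) : Prop :=
  ∀ i j, G.Adj (a i) (b j) ↔ i < j

namespace ShiftGraph

variable {A ι : Type} [LinearOrder A] [Preorder ι] {a b : ι → {s : Fin 2 → A // StrictMono s}}

theorem no_monochromatic_triangle (hab : (ShiftGraph A 2).IsHalfGraph a b)
    {i j k : ι} (hij : i < j) (hjk : j < k)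
    (hc₁ : (a i).1 1 = (b j).1 0 ↔ (a i).1 1 = (b k).1 0)
    (hc₂ : (a i).1 1 = (b j).1 0 ↔ (a j).1 1 = (b k).1 0) : False := by
  have hadj : ∀ {i j}, i < j → (a i).1 1 = (b j).1 0 ∨ (b j).1 1 = (a i).1 0 :=
    fun h => adj_two_iff.mp ((hab _ _).mpr h)
  refine lt_irrefl j ((hab j j).mp (adj_two_iff.mpr ?_))
  by_cases h : (a i).1 1 = (b j).1 0
  · exact Or.inl ((hc₂.mp h).trans ((hc₁.mp h).symm.trans h))
  · have hj := (hadj hij).resolve_left h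
    have hk := (hadj (hij.trans hjk)).resolve_left (mt hc₁.mpr h)
    exact Or.inr (hj.trans (hk.symm.trans ((hadj hjk).resolve_left (mt hc₂.mpr h))))

theorem not_isHalfGraph_fin_six (a b : Fin 6 → {s : Fin 2 → A // StrictMono s}) :
    ¬ (ShiftGraph A 2).IsHalfGraph a b := by
  classical
  intro hab
  obtain ⟨i, j, k, hij, hjk, hc₁, hc₂⟩ :=
    Fin.exists_monochromatic_triangle fun i j => decide ((a i).1 1 = (b j).1 0)
  exact no_monochromatic_triangle hab hij hjk (decide_eq_decide.mp hc₁) (decide_eq_decide.mp hc₂)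

end ShiftGraph

theorem stmt_8 :
    ∃ n : ℕ, ∀ (A : Type) (_ : LinearOrder A),
      ¬ ∃ a b : Fin n → {s : Fin 2 → A // StrictMono s},
        ∀ i j : Fin n, (ShiftGraph A 2).Adj (a i) (b j) ↔ i < j :=
  ⟨6, fun _ _ ⟨a, b, hab⟩ => ShiftGraph.not_isHalfGraph_fin_six a b hab⟩
end

section
/- Let r ≥ 1 and let M be a structure in the first-order language of graphs that is elementarily equivalent to the shift graph Sh_r(ℕ), with underlying set of infinite cardinality λ. Then M embeds as an induced subgraph into the symmetric shift graph Sh_r^{sym}(A) for some set A of cardinality λ: there is an injective map f from M into the vertices of Sh_r^{sym}(A) such that M ⊨ E(x, y) if and only if f(x) and f(y) are adjacent in Sh_r^{sym}(A). -/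
open Cardinal

open FirstOrder FirstOrder.Language

/-!
Compactness, carried out by hand with an ultraproduct. Since `M ≡ Sh_r(ℕ)`, every finite induced
subgraph of `M` embeds into `Sh_r(ℕ) ⊆ Sh_r^sym(ℕ)`: its quantifier-free diagram, existentially
closed, is a sentence true in `M`. Gluing these embeddings along an ultrafilter on the finite
subsets of `M` that contains every cone `{S | x ∈ S}` embeds `M` into `Sh_r^sym` of the ultrapower
of `ℕ`, because injectivity of a tuple, equality of tuples and the shift relation are finite
conjunctions of (in)equalities of coordinates. Finally, the coordinates actually used form an
alphabet of size exactly `λ`: at most `λ · r`, and at least `λ` since `M` injects into its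
`r`-tuples.
-/

def ShiftAdj {A : Type} {r : ℕ} (s t : Fin r → A) : Prop :=
  s ≠ t ∧ (IsShiftOf s t ∨ IsShiftOf t s)

theorem shiftGraph_adj {A : Type} [LinearOrder A] {r : ℕ}
    {s t : {s : Fin r → A // StrictMono s}} :
    (ShiftGraph A r).Adj s t ↔ ShiftAdj s.1 t.1 := by
  simp [ShiftGraph, ShiftAdj, Subtype.ext_iff]

theorem symShiftGraph_adj {A : Type} {r : ℕ} {s t : {s : Fin r → A // Function.Injective s}} :
    (SymShiftGraph A r).Adj s t ↔ ShiftAdj s.1 t.1 := by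
  simp [SymShiftGraph, ShiftAdj, Subtype.ext_iff]

theorem isShiftOf_comp_iff {A B : Type} {r : ℕ} {g : A → B} (hg : Function.Injective g)
    {s t : Fin r → A} : IsShiftOf (g ∘ s) (g ∘ t) ↔ IsShiftOf s t := by
  simp [IsShiftOf, hg.eq_iff]

theorem shiftAdj_comp_iff {A B : Type} {r : ℕ} {g : A → B} (hg : Function.Injective g)
    {s t : Fin r → A} : ShiftAdj (g ∘ s) (g ∘ t) ↔ ShiftAdj s t := by
  simp only [ShiftAdj, isShiftOf_comp_iff hg, (hg.comp_left).ne_iff]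

theorem isShiftOf_iff_forall_fin {A : Type} {r : ℕ} {s t : Fin r → A} :
    IsShiftOf s t ↔ ∀ (i : Fin r) (h : i.1 + 1 < r), s ⟨i + 1, h⟩ = t i :=
  ⟨fun h i hi => h i hi, fun h i hi => h ⟨i, by omega⟩ hi⟩

def ShiftGraph.toSymShiftGraph (A : Type) [LinearOrder A] (r : ℕ) :
    ShiftGraph A r ↪g SymShiftGraph A r where
  toFun s := ⟨s.1, s.2.injective⟩
  inj' _ _ h := Subtype.ext (congrArg Subtype.val h :)
  map_rel_iff' := symShiftGraph_adj.trans shiftGraph_adj.symm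

def SymShiftGraph.map {A B : Type} (g : A ↪ B) (r : ℕ) :
    SymShiftGraph A r ↪g SymShiftGraph B r where
  toFun s := ⟨g ∘ s.1, g.injective.comp s.2⟩
  inj' _ _ h := Subtype.ext (g.injective.comp_left (congrArg Subtype.val h :))
  map_rel_iff' :=
    symShiftGraph_adj.trans ((shiftAdj_comp_iff g.injective).trans symShiftGraph_adj.symm)

theorem Cardinal.mk_le_of_injective_fin_pi {M A : Type} [Infinite M] {r : ℕ}
    {f : M → Fin r → A} (hf : Function.Injective f) : #M ≤ #A := by
  have : Infinite A := not_finite_iff_infinite.1 fun _ => (Finite.of_injective f hf).false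
  calc #M ≤ #(Fin r → A) := mk_le_of_injective hf
    _ = #A ^ r := by simp
    _ ≤ #A := power_nat_le (aleph0_le_mk A)

theorem exists_relEmbedding_symShiftGraph_card_eq {M B : Type} [Infinite M] {R : M → M → Prop}
    {r : ℕ} (f : R ↪r (SymShiftGraph B r).Adj) :
    ∃ A : Type, #A = #M ∧ Nonempty (R ↪r (SymShiftGraph A r).Adj) := by
  set A := Set.range fun p : M × Fin r => (f p.1).1 p.2
  let incl := SymShiftGraph.map (Function.Embedding.subtype (· ∈ A)) r
  -- `f` factors as `incl ∘ f'`, definitionally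
  let f' : R ↪r (SymShiftGraph A r).Adj :=
    { toFun x := ⟨fun i => ⟨(f x).1 i, (x, i), rfl⟩,
        fun i j h => (f x).2 (congrArg Subtype.val h)⟩
      inj' x y h := f.injective (congrArg incl h)
      map_rel_iff' := incl.map_rel_iff.symm.trans f.map_rel_iff }
  refine ⟨A, le_antisymm ?_ ?_, ⟨f'⟩⟩
  · calc #A ≤ #(M × Fin r) := mk_range_le
      _ = #M * r := by simp [mk_prod]
      _ ≤ #M := mul_le_of_le (aleph0_le_mk M) le_rfl
        ((natCast_lt_aleph0 (n := r)).le.trans (aleph0_le_mk M))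
  · exact Cardinal.mk_le_of_injective_fin_pi (f := fun x => (f' x).1)
      (Subtype.val_injective.comp f'.injective)

namespace Filter.Germ

variable {ι α : Type} {l : Filter ι}

def tuple {κ : Type*} (l : Filter ι) (u : ι → κ → α) : κ → l.Germ α :=
  fun k => ↑(fun i => u i k)

theorem tuple_eq_tuple_iff {κ : Type*} [Finite κ] {u v : ι → κ → α} :
    tuple l u = tuple l v ↔ ∀ᶠ i in l, u i = v i := by
  simp only [funext_iff, tuple, Germ.coe_eq, EventuallyEq, eventually_all]

theorem injective_tuple {κ : Type*} [l.NeBot] {u : ι → κ → α}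
    (h : ∀ᶠ i in l, Function.Injective (u i)) : Function.Injective (tuple l u) := fun a b hab =>
  have hab : ∀ᶠ i in l, u i a = u i b := Germ.coe_eq.1 hab
  (h.and hab).exists.elim fun _ hi => hi.1 hi.2

theorem isShiftOf_tuple_iff {r : ℕ} {u v : ι → Fin r → α} :
    IsShiftOf (tuple l u) (tuple l v) ↔ ∀ᶠ i in l, IsShiftOf (u i) (v i) := by
  simp only [isShiftOf_iff_forall_fin, tuple, Germ.coe_eq, EventuallyEq, eventually_all]

theorem shiftAdj_tuple_iff {r : ℕ} {U : Ultrafilter ι} {u v : ι → Fin r → α} :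
    ShiftAdj (tuple U u) (tuple U v) ↔ ∀ᶠ i in U, ShiftAdj (u i) (v i) := by
  simp only [ShiftAdj, eventually_and, Ultrafilter.eventually_or, ne_eq,
    Ultrafilter.eventually_not, tuple_eq_tuple_iff, isShiftOf_tuple_iff]

end Filter.Germ

open Filter in
theorem exists_relEmbedding_symShiftGraph_of_forall_finset {M α : Type} [Nonempty α]
    {R : M → M → Prop} {r : ℕ}
    (h : ∀ S : Finset M, Nonempty (Subrel R (· ∈ S) ↪r (SymShiftGraph α r).Adj)) :
    ∃ B : Type, Nonempty (R ↪r (SymShiftGraph B r).Adj) := by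
  classical
  let e S := (h S).some
  let U : Ultrafilter (Finset M) := .of atTop
  have hmem (x : M) : ∀ᶠ S in (U : Filter (Finset M)), x ∈ S :=
    Ultrafilter.of_le _ ((eventually_ge_atTop {x}).mono fun _ => Finset.singleton_subset_iff.1)
  let u (x : M) (S : Finset M) : Fin r → α :=
    if hx : x ∈ S then (e S ⟨x, hx⟩).1 else fun _ => Classical.arbitrary α
  have hu_inj (x : M) : ∀ᶠ S in U, Function.Injective (u x S) :=
    (hmem x).mono fun S hx => by simpa only [u, dif_pos hx] using (e S ⟨x, hx⟩).2
  have hu (x y : M) : ∀ᶠ S in U, (u x S = u y S ↔ x = y) ∧ (ShiftAdj (u x S) (u y S) ↔ R x y) :=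
    ((hmem x).and (hmem y)).mono fun S ⟨hx, hy⟩ => by
      simp only [u, dif_pos hx, dif_pos hy]
      exact ⟨Subtype.ext_iff.symm.trans ((e S).injective.eq_iff.trans Subtype.ext_iff),
        symShiftGraph_adj.symm.trans (e S).map_rel_iff⟩
  refine ⟨(U : Filter (Finset M)).Germ α, ⟨
    { toFun x := ⟨Germ.tuple U (u x), Germ.injective_tuple (hu_inj x)⟩
      inj' x y hxy := ?_
      map_rel_iff' := ?_ }⟩⟩
  · have heq : ∀ᶠ S in U, u x S = u y S := Germ.tuple_eq_tuple_iff.1 (congrArg Subtype.val hxy)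
    exact ((hu x y).and heq).exists.elim fun _ hS => hS.1.1.1 hS.2
  · intro x y
    refine symShiftGraph_adj.trans (Germ.shiftAdj_tuple_iff.trans ⟨fun hadj => ?_, fun hxy => ?_⟩)
    · exact ((hu x y).and hadj).exists.elim fun _ hS => hS.1.2.1 hS.2
    · exact (hu x y).mono fun _ hS => hS.2.2 hxy

namespace FirstOrder.Language

open Structure

variable {L : Language} {M N : Type*} [L.Structure M] [L.Structure N]

noncomputable def Formula.literal {α : Type*} (p : Prop) [Decidable p] (φ : L.Formula α) :
    L.Formula α :=
  if p then φ else ∼φ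

theorem Formula.realize_literal {α : Type*} {p : Prop} [Decidable p] {φ : L.Formula α}
    {v : α → M} : (Formula.literal p φ).Realize v ↔ (φ.Realize v ↔ p) := by
  unfold Formula.literal
  split_ifs with hp <;> simp [hp]

open Classical in
noncomputable def Relations.diagram₂ (R : L.Relations 2) {β : Type*} [Finite β] (v : β → M) :
    L.Formula (Empty ⊕ β) :=
  Formula.iInf fun p : β × β =>
    Formula.literal (v p.1 = v p.2) (Term.equal (var (Sum.inr p.1)) (var (Sum.inr p.2))) ⊓
      Formula.literal (RelMap R ![v p.1, v p.2])
        (R.formula₂ (var (Sum.inr p.1)) (var (Sum.inr p.2)))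

theorem Relations.realize_diagram₂ (R : L.Relations 2) {β : Type*} [Finite β] (v : β → M)
    (w : β → N) : (R.diagram₂ v).Realize (Sum.elim default w) ↔
      ∀ i j, (w i = w j ↔ v i = v j) ∧ (RelMap R ![w i, w j] ↔ RelMap R ![v i, v j]) := by
  simp [Relations.diagram₂, Formula.realize_literal]

theorem ElementarilyEquivalent.nonempty_subrel_relEmbedding (h : M ≅[L] N) (R : L.Relations 2)
    (S : Finset M) :
    Nonempty
      (Subrel (fun x y => RelMap R ![x, y]) (· ∈ S) ↪r fun x y : N => RelMap R ![x, y]) := by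
  have hM : M ⊨ (R.diagram₂ ((↑) : S → M)).iExs S :=
    (Formula.realize_iExs).2 ⟨(↑), (R.realize_diagram₂ _ _).2 fun _ _ => ⟨Iff.rfl, Iff.rfl⟩⟩
  obtain ⟨w, hw⟩ := (Formula.realize_iExs).1 ((h.realize_sentence _).1 hM)
  rw [R.realize_diagram₂] at hw
  exact ⟨⟨⟨w, fun i j hij => Subtype.ext ((hw i j).1.1 hij)⟩, (hw _ _).2⟩⟩

end FirstOrder.Language

theorem stmt_12_general (r : ℕ) (M : Type) (SM : Language.graph.Structure M)
    (lam : Cardinal) (hlam : ℵ₀ ≤ lam) (hcard : #M = lam)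
    (heq : @ElementarilyEquivalent Language.graph M {s : Fin r → ℕ // StrictMono s}
      SM (ShiftGraph ℕ r).structure) :
    ∃ A : Type, #A = lam ∧
      ∃ f : M → {s : Fin r → A // Function.Injective s},
        Function.Injective f ∧
        ∀ x y : M,
          (@Structure.RelMap Language.graph M SM 2 adj ![x, y]) ↔
            (SymShiftGraph A r).Adj (f x) (f y) := by
  let := SM
  let := (ShiftGraph ℕ r).structure
  have : Infinite M := Cardinal.infinite_iff.2 (hcard ▸ hlam)
  obtain ⟨B, ⟨f⟩⟩ := exists_relEmbedding_symShiftGraph_of_forall_finset fun S =>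
    (heq.nonempty_subrel_relEmbedding adj S).map (·.trans (ShiftGraph.toSymShiftGraph ℕ r))
  obtain ⟨A, hA, ⟨f⟩⟩ := exists_relEmbedding_symShiftGraph_card_eq f
  exact ⟨A, hA.trans hcard, f, f.injective, fun x y => f.map_rel_iff.symm⟩

theorem stmt_12 (r : ℕ) (hr : 1 ≤ r) (M : Type) (SM : Language.graph.Structure M)
    (lam : Cardinal) (hlam : ℵ₀ ≤ lam) (hcard : #M = lam)
    (heq : @ElementarilyEquivalent Language.graph M {s : Fin r → ℕ // StrictMono s}
      SM (ShiftGraph ℕ r).structure) :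
    ∃ A : Type, #A = lam ∧
      ∃ f : M → {s : Fin r → A // Function.Injective s},
        Function.Injective f ∧
        ∀ x y : M,
          (@Structure.RelMap Language.graph M SM 2 adj ![x, y]) ↔
            (SymShiftGraph A r).Adj (f x) (f y) :=
  stmt_12_general r M SM lam hlam hcard heq
end

section
/- For every r ≥ 1 and any two infinite sets A and B, the symmetric shift graphs Sh_r^{sym}(A) and Sh_r^{sym}(B), viewed as structures in the first-order language of graphs, are elementarily equivalent. -/
open Cardinal

open FirstOrder FirstOrder.Language

/-! Finite partial bijections `A ⇀ B` preserve equality and the shift relation between the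
vertices whose entries they match, and since `A` and `B` are infinite such a partial bijection
can always be enlarged to match the entries of one more vertex, on either side. These matchings
therefore form a back-and-forth system between the two graphs, and Karp's theorem gives
elementary equivalence. -/

namespace FirstOrder.Language

variable {L : Language}

theorem Term.exists_eq_var_inr [L.IsRelational] {α : Type*} [IsEmpty α] {n : ℕ}
    (t : L.Term (α ⊕ Fin n)) : ∃ i, t = var (Sum.inr i) := by
  cases t with
  | var x =>
    rcases x with a | i
    · exact isEmptyElim a
    · exact ⟨i, rfl⟩
  | func f _ => exact isEmptyElim f

variable {M N : Type*} [L.Structure M] [L.Structure N]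

theorem BoundedFormula.IsAtomic.realize_iff_of_forall_iff [L.IsRelational]
    {α : Type*} [IsEmpty α] {n : ℕ} {φ : L.BoundedFormula α n} (hφ : φ.IsAtomic)
    (v : α → M) (w : α → N) {x : Fin n → M} {y : Fin n → N}
    (heq : ∀ i j, x i = x j ↔ y i = y j)
    (hrel : ∀ {l} (R : L.Relations l) (f : Fin l → Fin n),
      Structure.RelMap R (x ∘ f) ↔ Structure.RelMap R (y ∘ f)) :
    φ.Realize v x ↔ φ.Realize w y := by
  cases hφ with
  | equal t₁ t₂ =>
    obtain ⟨i, rfl⟩ := t₁.exists_eq_var_inr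
    obtain ⟨j, rfl⟩ := t₂.exists_eq_var_inr
    exact heq i j
  | rel R ts =>
    choose f hf using fun k => (ts k).exists_eq_var_inr
    obtain rfl : ts = fun k => Term.var (Sum.inr (f k)) := funext hf
    exact hrel R f

theorem BoundedFormula.realize_iff_of_backAndForth
    (S : ∀ n, (Fin n → M) → (Fin n → N) → Prop)
    (atomic : ∀ n x y, S n x y → ∀ φ : L.BoundedFormula Empty n, φ.IsAtomic →
      (φ.Realize default x ↔ φ.Realize default y))
    (forth : ∀ n x y, S n x y → ∀ a, ∃ b, S (n + 1) (Fin.snoc x a) (Fin.snoc y b))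
    (back : ∀ n x y, S n x y → ∀ b, ∃ a, S (n + 1) (Fin.snoc x a) (Fin.snoc y b))
    {n : ℕ} (φ : L.BoundedFormula Empty n) {x : Fin n → M} {y : Fin n → N} (h : S n x y) :
    φ.Realize default x ↔ φ.Realize default y := by
  induction φ with
  | falsum => exact Iff.rfl
  | equal t₁ t₂ => exact atomic _ x y h _ (.equal t₁ t₂)
  | rel R ts => exact atomic _ x y h _ (.rel R ts)
  | imp φ ψ ihφ ihψ => exact imp_congr (ihφ h) (ihψ h)
  | all φ ih =>
    simp only [realize_all]
    constructor
    · intro hx b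
      obtain ⟨a, hab⟩ := back _ x y h b
      exact (ih hab).1 (hx a)
    · intro hy a
      obtain ⟨b, hab⟩ := forth _ x y h a
      exact (ih hab).2 (hy b)

theorem elementarilyEquivalent_of_backAndForth
    (S : ∀ n, (Fin n → M) → (Fin n → N) → Prop)
    (atomic : ∀ n x y, S n x y → ∀ φ : L.BoundedFormula Empty n, φ.IsAtomic →
      (φ.Realize default x ↔ φ.Realize default y))
    (forth : ∀ n x y, S n x y → ∀ a, ∃ b, S (n + 1) (Fin.snoc x a) (Fin.snoc y b))
    (back : ∀ n x y, S n x y → ∀ b, ∃ a, S (n + 1) (Fin.snoc x a) (Fin.snoc y b))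
    (h₀ : S 0 default default) : M ≅[L] N :=
  elementarilyEquivalent_iff.2 fun φ =>
    BoundedFormula.realize_iff_of_backAndForth S atomic forth back φ h₀

end FirstOrder.Language

section PartialBij

variable {α β : Type*}

def IsPartialBij (p : Finset (α × β)) : Prop :=
  ∀ ⦃a b a' b'⦄, (a, b) ∈ p → (a', b') ∈ p → (a = a' ↔ b = b')

namespace IsPartialBij

theorem empty : IsPartialBij (∅ : Finset (α × β)) :=
  fun _ _ _ _ h => absurd h (Finset.notMem_empty _)

theorem map_prodComm {p : Finset (α × β)} (hp : IsPartialBij p) :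
    IsPartialBij (p.map (Equiv.prodComm α β).toEmbedding) := by
  intro b a b' a' h h'
  rw [Finset.mem_map_equiv] at h h'
  exact (hp h h').symm

variable [Infinite β]

theorem exists_superset_mem {p : Finset (α × β)} (hp : IsPartialBij p) (a : α) :
    ∃ q, p ⊆ q ∧ IsPartialBij q ∧ ∃ b, (a, b) ∈ q := by
  classical
  by_cases ha : ∃ b, (a, b) ∈ p
  · exact ⟨p, subset_rfl, hp, ha⟩
  push Not at ha
  obtain ⟨b, hb⟩ := Infinite.exists_notMem_finset (p.image Prod.snd)
  have fresh : ∀ ⦃a' b'⦄, (a', b') ∈ p → a ≠ a' ∧ b ≠ b' := fun a' b' h =>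
    ⟨fun e => ha b' (e ▸ h), fun e => hb (Finset.mem_image.2 ⟨_, h, e.symm⟩)⟩
  refine ⟨insert (a, b) p, Finset.subset_insert _ _, ?_, b, Finset.mem_insert_self _ _⟩
  intro x y x' y' h h'
  simp only [Finset.mem_insert, Prod.mk.injEq] at h h'
  rcases h with ⟨rfl, rfl⟩ | h <;> rcases h' with ⟨rfl, rfl⟩ | h'
  · simp
  · simp [fresh h']
  · simp [(fresh h).1.symm, (fresh h).2.symm]
  · exact hp h h'

theorem exists_superset_forall_mem {p : Finset (α × β)} (hp : IsPartialBij p)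
    (T : Finset α) : ∃ q, p ⊆ q ∧ IsPartialBij q ∧ ∀ a ∈ T, ∃ b, (a, b) ∈ q := by
  classical
  induction T using Finset.induction_on with
  | empty => exact ⟨p, subset_rfl, hp, by simp⟩
  | insert a T _ ih =>
    obtain ⟨q, hpq, hq, hT⟩ := ih
    obtain ⟨q', hqq', hq', b, hab⟩ := hq.exists_superset_mem a
    refine ⟨q', hpq.trans hqq', hq', fun a' ha' => ?_⟩
    rcases Finset.mem_insert.1 ha' with rfl | ha'
    · exact ⟨b, hab⟩
    · obtain ⟨b', h⟩ := hT a' ha'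
      exact ⟨b', hqq' h⟩

end IsPartialBij

end PartialBij

namespace SymShiftGraph

variable {A B : Type} {r : ℕ}

def Matched (n : ℕ) (x : Fin n → {s : Fin r → A // Function.Injective s})
    (y : Fin n → {s : Fin r → B // Function.Injective s}) : Prop :=
  ∃ p : Finset (A × B), IsPartialBij p ∧ ∀ i j, ((x i).1 j, (y i).1 j) ∈ p

variable {n : ℕ} {x : Fin n → {s : Fin r → A // Function.Injective s}}
  {y : Fin n → {s : Fin r → B // Function.Injective s}}

theorem Matched.symm (h : Matched n x y) : Matched n y x := by
  obtain ⟨p, hp, hxy⟩ := h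
  exact ⟨_, hp.map_prodComm, fun i j => Finset.mem_map_equiv.2 (hxy i j)⟩

theorem Matched.eq_iff (h : Matched n x y) (i k : Fin n) : x i = x k ↔ y i = y k := by
  obtain ⟨p, hp, hxy⟩ := h
  simp only [Subtype.ext_iff, funext_iff]
  exact forall_congr' fun j => hp (hxy i j) (hxy k j)

theorem Matched.isShiftOf_iff (h : Matched n x y) (i k : Fin n) :
    IsShiftOf (x i).1 (x k).1 ↔ IsShiftOf (y i).1 (y k).1 := by
  obtain ⟨p, hp, hxy⟩ := h
  exact forall_congr' fun _ => forall_congr' fun _ => hp (hxy i _) (hxy k _)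

theorem Matched.adj_iff (h : Matched n x y) (i k : Fin n) :
    (SymShiftGraph A r).Adj (x i) (x k) ↔ (SymShiftGraph B r).Adj (y i) (y k) :=
  and_congr (not_congr (h.eq_iff i k)) (or_congr (h.isShiftOf_iff i k) (h.isShiftOf_iff k i))

theorem Matched.forth [Infinite B] (h : Matched n x y)
    (a : {s : Fin r → A // Function.Injective s}) :
    ∃ b, Matched (n + 1) (Fin.snoc x a) (Fin.snoc y b) := by
  classical
  obtain ⟨p, hp, hxy⟩ := h
  obtain ⟨q, hpq, hq, hcov⟩ := hp.exists_superset_forall_mem (Finset.univ.image a.1)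
  choose b hb using fun j => hcov (a.1 j) (Finset.mem_image_of_mem _ (Finset.mem_univ j))
  have hinj : Function.Injective b := fun j k e => a.2 ((hq (hb j) (hb k)).2 e)
  refine ⟨⟨b, hinj⟩, q, hq, fun i => Fin.lastCases ?_ (fun i j => ?_) i⟩
  · simpa using hb
  · simpa using hpq (hxy i j)

theorem Matched.back [Infinite A] (h : Matched n x y)
    (b : {s : Fin r → B // Function.Injective s}) :
    ∃ a, Matched (n + 1) (Fin.snoc x a) (Fin.snoc y b) := by
  obtain ⟨a, hab⟩ := h.symm.forth b
  exact ⟨a, hab.symm⟩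

end SymShiftGraph

theorem stmt_13_general (r : ℕ) (A B : Type) (hA : Infinite A) (hB : Infinite B) :
    @ElementarilyEquivalent Language.graph
      {s : Fin r → A // Function.Injective s} {s : Fin r → B // Function.Injective s}
      (SymShiftGraph A r).structure (SymShiftGraph B r).structure := by
  let := (SymShiftGraph A r).structure
  let := (SymShiftGraph B r).structure
  refine elementarilyEquivalent_of_backAndForth SymShiftGraph.Matched
    (fun _ _ _ h _ hφ => hφ.realize_iff_of_forall_iff _ _ h.eq_iff fun R f => by
      cases R
      exact h.adj_iff (f 0) (f 1))
    (fun _ _ _ h => h.forth) (fun _ _ _ h => h.back) ⟨∅, .empty, nofun⟩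

theorem stmt_13 (r : ℕ) (hr : 1 ≤ r) (A B : Type) (hA : Infinite A) (hB : Infinite B) :
    @ElementarilyEquivalent Language.graph
      {s : Fin r → A // Function.Injective s} {s : Fin r → B // Function.Injective s}
      (SymShiftGraph A r).structure (SymShiftGraph B r).structure :=
  stmt_13_general r A B hA hB
end

section
/- Let 1 ≤ r < ω and let μ be an infinite cardinal. If A is a set of cardinality ℶ_{r−1}(μ), then the symmetric shift graph Sh_r^{sym}(A) has a proper coloring with colors in a set of cardinality μ; in particular its chromatic number is at most μ. -/
open Cardinal

/-- Iterated beth: `iterBeth μ 0 = μ` and `iterBeth μ (k+1) = 2 ^ iterBeth μ k`. -/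
def iterBeth (μ : Cardinal) : ℕ → Cardinal
  | 0 => μ
  | k + 1 => 2 ^ iterBeth μ k

/-!
Identify `A` with the power set of a set `B` of size `ℶ_{r-2}(μ)` and send an `r`-tuple `s` of
subsets to the `(r-1)`-tuple `δ s` of points where consecutive entries `s i`, `s (i+1)` differ
(`none` where they agree). If `t` is a shift of `s` then `δ t` is a shift of `δ s`, so by induction
a colouring of the tuples over `Option B` with `μ` colours separates them unless `δ s = δ t`.
In that case `δ s` is constant, say `x`, and the bit `x ∈ s 0` separates `s` from `t`, because
`t 0 = s 1` and `s 0`, `s 1` differ at `x`. Injectivity of the tuples plays no role, and dropping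
it is what lets the induction go through, since `δ s` need not be injective.
-/

variable {A B C : Type}

def IsShiftColoring {r : ℕ} (c : (Fin r → A) → C) : Prop :=
  ∀ s t, s ≠ t → IsShiftOf s t → c s ≠ c t

lemma IsShiftOf.apply_eq_apply_zero {m : ℕ} {f : Fin (m + 1) → A} (h : IsShiftOf f f)
    (i : Fin (m + 1)) : f i = f 0 := by
  induction i using Fin.induction with
  | zero => rfl
  | succ i ih => exact (h i i.succ.isLt).trans ih

lemma IsShiftOf.comp {r : ℕ} {s t : Fin r → A} (h : IsShiftOf s t) (f : A → B) :
    IsShiftOf (f ∘ s) (f ∘ t) :=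
  fun i hi => congrArg f (h i hi)

lemma eq_of_isShiftOf_of_isShiftOf_self {m : ℕ} {s t : Fin (m + 2) → A} (h : IsShiftOf s t)
    (hs : IsShiftOf s s) (ht : IsShiftOf t t) : s = t := by
  funext i
  rw [hs.apply_eq_apply_zero i, ht.apply_eq_apply_zero i]
  exact (hs.apply_eq_apply_zero ⟨1, by omega⟩).symm.trans (h 0 (by omega))

lemma isShiftColoring_eval_zero : IsShiftColoring (fun s : Fin 1 → A => s 0) :=
  fun _ _ hne _ h => hne (funext fun i => Subsingleton.elim i 0 ▸ h)

lemma IsShiftColoring.comp_injective {r : ℕ} {c : (Fin r → A) → C} (hc : IsShiftColoring c)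
    {f : B → A} (hf : f.Injective) : IsShiftColoring (fun s : Fin r → B => c (f ∘ s)) :=
  fun _ _ hne h => hc _ _ (hf.comp_left.ne hne) (h.comp f)

open scoped symmDiff

open Classical in
noncomputable def diffPoint (u v : Set B) : Option B :=
  if h : (u ∆ v).Nonempty then some h.some else none

lemma diffPoint_eq_none_iff {u v : Set B} : diffPoint u v = none ↔ u = v := by
  simp [diffPoint, Set.symmDiff_nonempty]

lemma mem_symmDiff_of_diffPoint_eq_some {u v : Set B} {x : B} (h : diffPoint u v = some x) :
    x ∈ u ∆ v := by
  unfold diffPoint at h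
  split_ifs at h with hne
  exact Option.some_inj.1 h ▸ hne.some_mem

noncomputable def diffPoints {m : ℕ} (s : Fin (m + 1) → Set B) : Fin m → Option B :=
  fun i => diffPoint (s i.castSucc) (s i.succ)

lemma IsShiftOf.diffPoints {m : ℕ} {s t : Fin (m + 1) → Set B} (h : IsShiftOf s t) :
    IsShiftOf (diffPoints s) (diffPoints t) := by
  intro i hi
  show diffPoint (s ⟨i + 1, _⟩) (s ⟨i + 2, _⟩) = diffPoint (t ⟨i, _⟩) (t ⟨i + 1, _⟩)
  rw [h i (by omega), h (i + 1) (by omega)]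

lemma isShiftOf_self_of_diffPoints_eq_none {m : ℕ} {s : Fin (m + 1) → Set B}
    (h : ∀ i, diffPoints s i = none) : IsShiftOf s s :=
  fun i hi => (diffPoint_eq_none_iff.1 (h ⟨i, by omega⟩)).symm

lemma IsShiftColoring.comp_diffPoints {m : ℕ} {c : (Fin (m + 1) → Option B) → C}
    (hc : IsShiftColoring c) :
    IsShiftColoring fun s : Fin (m + 2) → Set B =>
      (c (diffPoints s), ∃ x ∈ diffPoints s 0, x ∈ s 0) := by
  intro s t hne hst hcol
  obtain ⟨hcol, hbit⟩ := Prod.ext_iff.1 hcol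
  have hd : diffPoints s = diffPoints t := by
    by_contra hd
    exact hc _ _ hd hst.diffPoints hcol
  have hconst : IsShiftOf (diffPoints s) (diffPoints s) := by
    simpa only [← hd] using hst.diffPoints
  cases h0 : diffPoints s 0 with
  | none =>
    have hs : ∀ i, diffPoints s i = none := fun i => (hconst.apply_eq_apply_zero i).trans h0
    refine hne (eq_of_isShiftOf_of_isShiftOf_self hst ?_ ?_)
    · exact isShiftOf_self_of_diffPoints_eq_none hs
    · exact isShiftOf_self_of_diffPoints_eq_none (hd ▸ hs)
  | some x =>
    have hx : x ∈ s 0 ∆ s 1 := mem_symmDiff_of_diffPoint_eq_some h0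
    have hx' : x ∈ s 0 ↔ x ∈ t 0 := by simpa [h0, ← hd] using hbit
    rw [← show s 1 = t 0 from hst 0 (by omega)] at hx'
    grind

lemma aleph0_le_iterBeth {μ : Cardinal} (hμ : ℵ₀ ≤ μ) (n : ℕ) : ℵ₀ ≤ iterBeth μ n := by
  induction n with
  | zero => exact hμ
  | succ n ih => exact ih.trans (cantor _).le

lemma mk_prod_prop_eq {μ : Cardinal} (hμ : ℵ₀ ≤ μ) (hC : #C = μ) : #(C × Prop) = μ := by
  rw [mk_prod, lift_id, lift_id, hC, mk_Prop]
  exact mul_eq_left hμ (ofNat_le_aleph0.trans hμ) two_ne_zero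

theorem exists_isShiftColoring {μ : Cardinal} (hμ : ℵ₀ ≤ μ) (n : ℕ)
    (hA : #A = iterBeth μ n) :
    ∃ (C : Type) (c : (Fin (n + 1) → A) → C), #C = μ ∧ IsShiftColoring c := by
  induction n generalizing A with
  | zero => exact ⟨A, fun s => s 0, hA, isShiftColoring_eval_zero⟩
  | succ n ih =>
    obtain ⟨B, hB⟩ : ∃ B : Type, #B = iterBeth μ n := ⟨_, mk_out _⟩
    have hOption : #(Option B) = iterBeth μ n := by
      rw [mk_option, add_one_eq (hB ▸ aleph0_le_iterBeth hμ n), hB]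
    obtain ⟨C, c, hC, hc⟩ := ih hOption
    obtain ⟨e⟩ : Nonempty (A ≃ Set B) := Cardinal.eq.1 (by rw [hA, mk_set, hB]; rfl)
    exact ⟨C × Prop, _, mk_prod_prop_eq hμ hC, hc.comp_diffPoints.comp_injective e.injective⟩

theorem stmt_14 (r : ℕ) (hr : 1 ≤ r) (μ : Cardinal) (hμ : ℵ₀ ≤ μ)
    (A : Type) (hA : #A = iterBeth μ (r - 1)) :
    ∃ (C : Type) (c : {s : Fin r → A // Function.Injective s} → C), #C = μ ∧
      ∀ x y : {s : Fin r → A // Function.Injective s},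
        (SymShiftGraph A r).Adj x y → c x ≠ c y := by
  obtain ⟨n, rfl⟩ : ∃ n, r = n + 1 := ⟨r - 1, by omega⟩
  obtain ⟨C, c, hC, hc⟩ := exists_isShiftColoring hμ n hA
  refine ⟨C, fun x => c x.1, hC, ?_⟩
  rintro x y ⟨hne, hxy | hyx⟩
  · exact hc x.1 y.1 (Subtype.coe_ne_coe.2 hne) hxy
  · exact (hc y.1 x.1 (Subtype.coe_ne_coe.2 hne.symm) hyx).symm
end

section
/- Let 1 ≤ r < ω and let μ be an infinite cardinal. The shift graph Sh_r(κ), where κ is the successor cardinal ℶ_{r−1}(μ)⁺ with its natural ordinal order, has no proper coloring with colors in a set of cardinality at most μ; in particular its chromatic number is at least μ⁺. -/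
open Cardinal

/-!
A proper coloring `c` of `Sh_{m+2}(A)` with colors in `C` induces a proper coloring of
`Sh_{m+1}(A)` with colors in `Set C`: color `s` by the set of colors `c (s ⌢ a)` of its one-point
end-extensions. If `t` is the shift of `s` with `s_last < t_last`, then `s ⌢ t_last` is adjacent to
every end-extension `t ⌢ b`, so `c (s ⌢ t_last)` is a color of `s` but not of `t`.
Iterating down to `Sh_1(A)`, where a proper coloring is an injection, gives `|A| ≤ ℶ_{r-1}(|C|)`,
which is incompatible with `|A| = ℶ_{r-1}(μ)⁺` and `|C| ≤ μ`.
-/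

lemma iterBeth_two_pow (ν : Cardinal) : ∀ m, iterBeth (2 ^ ν) m = iterBeth ν (m + 1)
  | 0 => rfl
  | m + 1 => by rw [iterBeth, iterBeth_two_pow ν m]; rfl

lemma iterBeth_mono {a b : Cardinal} (h : a ≤ b) : ∀ m, iterBeth a m ≤ iterBeth b m
  | 0 => h
  | m + 1 => power_le_power_left two_ne_zero (iterBeth_mono h m)

section Shift

variable {A : Type} {m : ℕ}

lemma Fin.strictMono_snoc [LinearOrder A] {f : Fin (m + 1) → A} {a : A} (hf : StrictMono f)
    (ha : f (Fin.last m) < a) : StrictMono (Fin.snoc f a : Fin (m + 2) → A) := by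
  refine Fin.strictMono_iff_lt_succ.2 fun i => ?_
  induction i using Fin.lastCases with
  | last => rwa [Fin.succ_last, Fin.snoc_last, Fin.snoc_castSucc]
  | cast i =>
    rw [Fin.succ_castSucc, Fin.snoc_castSucc, Fin.snoc_castSucc]
    exact hf Fin.castSucc_lt_succ

lemma isShiftOf_of_le_one {r : ℕ} (hr : r ≤ 1) (s t : Fin r → A) : IsShiftOf s t :=
  fun _ h => absurd h (by omega)

lemma IsShiftOf.snoc {s t : Fin (m + 1) → A} (h : IsShiftOf s t) (b : A) :
    IsShiftOf (Fin.snoc s (t (Fin.last m)) : Fin (m + 2) → A) (Fin.snoc t b) := by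
  intro i hi
  simp only [Fin.snoc]
  split_ifs with h₁ h₂ h₂
  · exact h i h₁
  · omega
  · simp [Fin.last, show i = m by omega]
  · omega

lemma IsShiftOf.last_lt [LinearOrder A] {s t : Fin (m + 1) → A} (h : IsShiftOf s t)
    (ht : StrictMono t) (hm : m ≠ 0) : s (Fin.last m) < t (Fin.last m) := by
  obtain ⟨k, rfl⟩ := Nat.exists_eq_succ_of_ne_zero hm
  rw [show Fin.last (k + 1) = ⟨k + 1, by omega⟩ from rfl, h k (by omega)]
  exact ht (Fin.mk_lt_mk.2 (Nat.lt_succ_self k))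

namespace ShiftGraph

variable [LinearOrder A]

lemma adj_iff_ne_of_fin_one {x y : {s : Fin 1 → A // StrictMono s}} :
    (ShiftGraph A 1).Adj x y ↔ x ≠ y :=
  ⟨fun h => h.1, fun h => ⟨h, Or.inl (isShiftOf_of_le_one le_rfl _ _)⟩⟩

lemma isShiftOf_and_last_lt_of_adj {x y : {s : Fin (m + 1) → A // StrictMono s}}
    (h : (ShiftGraph A (m + 1)).Adj x y) :
    (IsShiftOf x.1 y.1 ∧ x.1 (Fin.last m) < y.1 (Fin.last m)) ∨
      (IsShiftOf y.1 x.1 ∧ y.1 (Fin.last m) < x.1 (Fin.last m)) := by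
  rcases eq_or_ne m 0 with rfl | hm
  · have hne : x.1 (Fin.last 0) ≠ y.1 (Fin.last 0) := fun he =>
      h.1 (Subtype.ext (funext fun i => by rwa [Subsingleton.elim (α := Fin 1) i (Fin.last 0)]))
    exact hne.lt_or_gt.imp (⟨isShiftOf_of_le_one le_rfl _ _, ·⟩)
      (⟨isShiftOf_of_le_one le_rfl _ _, ·⟩)
  · exact h.2.imp (fun hs => ⟨hs, hs.last_lt y.2 hm⟩) (fun hs => ⟨hs, hs.last_lt x.2 hm⟩)

variable {C : Type}

def extensionColors (c : {s : Fin (m + 2) → A // StrictMono s} → C)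
    (s : {s : Fin (m + 1) → A // StrictMono s}) : Set C :=
  Set.range fun a : {a // s.1 (Fin.last m) < a} =>
    c ⟨Fin.snoc s.1 a.1, Fin.strictMono_snoc s.2 a.2⟩

lemma extensionColors_ne (c : (ShiftGraph A (m + 2)).Coloring C)
    {s t : {s : Fin (m + 1) → A // StrictMono s}} (hst : IsShiftOf s.1 t.1)
    (hlt : s.1 (Fin.last m) < t.1 (Fin.last m)) : extensionColors c s ≠ extensionColors c t := by
  intro heq
  obtain ⟨⟨b, hb⟩, hcb⟩ : c ⟨Fin.snoc s.1 (t.1 (Fin.last m)), Fin.strictMono_snoc s.2 hlt⟩ ∈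
      extensionColors c t := heq ▸ ⟨⟨_, hlt⟩, rfl⟩
  refine c.valid ⟨fun h => hb.ne ?_, Or.inl (hst.snoc b)⟩ hcb.symm
  simpa using congrFun (congrArg Subtype.val h) (Fin.last (m + 1))

def extensionColoring (c : (ShiftGraph A (m + 2)).Coloring C) :
    (ShiftGraph A (m + 1)).Coloring (Set C) :=
  SimpleGraph.Coloring.mk (extensionColors c) fun h => (isShiftOf_and_last_lt_of_adj h).elim
    (fun ⟨hs, hlt⟩ => extensionColors_ne c hs hlt)
    (fun ⟨hs, hlt⟩ => (extensionColors_ne c hs hlt).symm)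

lemma card_le_iterBeth_of_coloring (c : (ShiftGraph A (m + 1)).Coloring C) :
    #A ≤ iterBeth #C m := by
  induction m generalizing C with
  | zero =>
    let single (a : A) : {s : Fin 1 → A // StrictMono s} := ⟨fun _ => a, Subsingleton.strictMono _⟩
    refine mk_le_of_injective (f := fun a => c (single a)) fun a b hab => by_contra fun hne => ?_
    refine c.valid (adj_iff_ne_of_fin_one.2 fun h => hne ?_) hab
    exact congrFun (congrArg Subtype.val h) 0
  | succ m ih =>
    calc #A ≤ iterBeth #(Set C) m := ih (extensionColoring c)
      _ = iterBeth #C (m + 1) := by rw [mk_set, iterBeth_two_pow]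

end ShiftGraph

end Shift

theorem stmt_15_general (r : ℕ) (hr : 1 ≤ r) (μ : Cardinal) :
    ¬ ∃ (C : Type)
        (c : {s : Fin r → (Order.succ (iterBeth μ (r - 1))).ord.ToType //
          StrictMono s} → C), #C ≤ μ ∧
        ∀ x y, (ShiftGraph (Order.succ (iterBeth μ (r - 1))).ord.ToType r).Adj x y →
          c x ≠ c y := by
  obtain ⟨m, rfl⟩ : ∃ m, r = m + 1 := ⟨r - 1, by omega⟩
  rintro ⟨C, c, hC, hc⟩
  have hA := ShiftGraph.card_le_iterBeth_of_coloring (SimpleGraph.Coloring.mk c (hc _ _ ·))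
  rw [mk_ord_toType, Nat.add_sub_cancel] at hA
  exact (Order.lt_succ _).not_ge (hA.trans (iterBeth_mono hC m))

theorem stmt_15 (r : ℕ) (hr : 1 ≤ r) (μ : Cardinal) (hμ : ℵ₀ ≤ μ) :
    ¬ ∃ (C : Type)
        (c : {s : Fin r → (Order.succ (iterBeth μ (r - 1))).ord.ToType //
          StrictMono s} → C), #C ≤ μ ∧
        ∀ x y, (ShiftGraph (Order.succ (iterBeth μ (r - 1))).ord.ToType r).Adj x y →
          c x ≠ c y :=
  stmt_15_general r hr μ
end
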